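/- arXiv:0712.0285 — 8 statements merged into one kernel-verified Lean document; each statement's English description precedes it below -/
import Mathlib

section
/- Let ℓ ≥ 1, let n be an integer and k ∈ {0,…,n−ℓ}. Assume β_{j|n}(x) > 0 for all j and x, and W[y_{k+1:k+ℓ}](x_0,x_{ℓ+1};X) > 0 for all x_0, x_{ℓ+1}. Then for every set C ∈ 𝒳, inf_{x∈X} (F_{k+ℓ−1|n} ∘ ⋯ ∘ F_{k|n})(x,C) ≥ α(y_{k+1:k+ℓ};C), where α(y_{1:ℓ};C) := inf_{(x_0,x_{ℓ+1})∈X×X} W[y_{1:ℓ}](x_0,x_{ℓ+1};C) / W[y_{1:ℓ}](x_0,x_{ℓ+1};X). -/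
open MeasureTheory ProbabilityTheory Filter
open scoped ENNReal

noncomputable section

variable {X : Type*} {Y : Type*} [MeasurableSpace X] [MeasurableSpace Y]

/-- Total variation distance between two measures: `sup_A |μ(A) - ν(A)|`,
the supremum running over all measurable sets. -/
def tvDist (μ ν : Measure X) : ℝ :=
  ⨆ A : {s : Set X // MeasurableSet s}, |(μ A.1).toReal - (ν A.1).toReal|

/-- Auxiliary recursion (with "fuel" `m = n - k`) defining the backward functions. -/
def backwardAux (Q : Kernel X X) (g : X → Y → ℝ≥0∞) (y : ℕ → Y) (n : ℕ) : ℕ → X → ℝ≥0∞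
  | 0 => fun _ => 1
  | m + 1 => fun x => ∫⁻ x', g x' (y (n - m)) * backwardAux Q g y n m x' ∂(Q x)

/-- The backward function `β_{k|n}`: `β_{n|n} ≡ 1` and
`β_{k|n}(x) = ∫ Q(x,dx') g(x', y_{k+1}) β_{k+1|n}(x')`. -/
def backward (Q : Kernel X X) (g : X → Y → ℝ≥0∞) (y : ℕ → Y) (n k : ℕ) : X → ℝ≥0∞ :=
  backwardAux Q g y n (n - k)

/-- The forward smoothing kernel `F_{k|n}`. -/
def forwardKernel (Q : Kernel X X) (g : X → Y → ℝ≥0∞) (y : ℕ → Y) (n k : ℕ) (x : X) :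
    Measure X :=
  if k < n then
    if backward Q g y n k x ≠ 0 then
      (backward Q g y n k x)⁻¹ •
        ((Q x).withDensity fun x' => g x' (y (k + 1)) * backward Q g y n (k + 1) x')
    else 0
  else Q x

/-- Composition of a family of (sub-)kernels: `iterComp F l s` applies
`F s`, then `F (s+1)`, ..., then `F (s+l-1)`. -/
def iterComp (F : ℕ → X → Measure X) : ℕ → ℕ → X → Measure X
  | 0, _, x => Measure.dirac x
  | l + 1, s, x => (F s x).bind (iterComp F l (s + 1))

/-- The `m`-skeleton `F_{k,m|n} = F_{km+m-1|n} ∘ ⋯ ∘ F_{km|n}`. -/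
def skeleton (Q : Kernel X X) (g : X → Y → ℝ≥0∞) (y : ℕ → Y) (n k m : ℕ) : X → Measure X :=
  iterComp (forwardKernel Q g y n) m (k * m)

/-- Coupling constant of a set `C ⊆ X × X` for the family of measures `x ↦ F x`:
`ε(C) = 1 - (1/2) sup_{(x,x') ∈ C} ‖F x - F x'‖_TV`. -/
def couplingConst (F : X → Measure X) (C : Set (X × X)) : ℝ :=
  1 - (1 / 2) * ⨆ p : C, tvDist (F (p : X × X).1) (F (p : X × X).2)

/-- Unnormalized filtering measure:
`A ↦ ∫ ξ(dx₀) g(x₀,y₀) ∏_{i=1}^n Q(x_{i-1},dx_i) g(x_i,y_i) 1_A(x_n)`. -/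
def unnormFilter (Q : Kernel X X) (g : X → Y → ℝ≥0∞) (y : ℕ → Y) (ξ : Measure X) :
    ℕ → Measure X
  | 0 => ξ.withDensity fun x => g x (y 0)
  | k + 1 =>
    (unnormFilter Q g y ξ k).bind fun x => (Q x).withDensity fun x' => g x' (y (k + 1))

/-- The filtering distribution `φ_{ξ,n}`: the unnormalized filter, normalized. -/
def filterDist (Q : Kernel X X) (g : X → Y → ℝ≥0∞) (y : ℕ → Y) (ξ : Measure X) (n : ℕ) :
    Measure X :=
  (unnormFilter Q g y ξ n Set.univ)⁻¹ • unnormFilter Q g y ξ n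


/-- The quantity
`W[y_{1:ℓ}](x₀, x_{ℓ+1}; A) = ∫⋯∫ ∏_{i=1}^ℓ q(x_{i−1},x_i) g(x_i,y_i) · q(x_ℓ,x_{ℓ+1}) 1_A(x_ℓ)
μ(dx_1)⋯μ(dx_ℓ)`, defined by recursion on `ℓ`; the sequence `ys` is used through
`ys 1, …, ys ℓ`. -/
def Wfun (q : X → X → ℝ≥0∞) (g : X → Y → ℝ≥0∞) (μ : Measure X) :
    ℕ → (ℕ → Y) → X → X → Set X → ℝ≥0∞
  | 0, _, x0, xe, A => A.indicator (fun _ => (1 : ℝ≥0∞)) x0 * q x0 xe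
  | l + 1, ys, x0, xe, A =>
    ∫⁻ x1, q x0 x1 * g x1 (ys 1) * Wfun q g μ l (fun i => ys (i + 1)) x1 xe A ∂μ

/-! Multiplying the composed kernel by `β_{k|n}(x)` clears all the normalisations of the
forward kernels: `β_{k|n}(x) (F_{k+ℓ−1|n} ∘ ⋯ ∘ F_{k|n})(x,C)` equals
`∫ μ(dz) h(z) W[y_{k+1:k+ℓ}](x,z;C)`, where `h` is the integrand of `β_{k+ℓ|n} = ∫ Q(·,dz) h(z)`.
Taking `C = X` identifies `β_{k|n}(x)` with the same integral over `W(x,z;X)`, and the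
pointwise bound `α W(x,z;X) ≤ W(x,z;C)` integrates to `α β_{k|n}(x) ≤ β_{k|n}(x) F(x,C)`. -/

section IterComp

variable {F : ℕ → X → Measure X}

lemma measurable_iterComp (hF : ∀ s, Measurable (F s)) (l s : ℕ) :
    Measurable (iterComp F l s) := by
  induction l generalizing s with
  | zero => exact Measure.measurable_dirac
  | succ l ih => exact (Measure.measurable_bind' (ih (s + 1))).comp (hF s)

lemma iterComp_succ_apply (hF : ∀ s, Measurable (F s)) (l s : ℕ) (x : X) {C : Set X}
    (hC : MeasurableSet C) :
    iterComp F (l + 1) s x C = ∫⁻ x', iterComp F l (s + 1) x' C ∂F s x :=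
  Measure.bind_apply hC (measurable_iterComp hF l (s + 1)).aemeasurable

lemma isProbabilityMeasure_iterComp (hF : ∀ s, Measurable (F s))
    (hprob : ∀ s x, IsProbabilityMeasure (F s x)) (l s : ℕ) (x : X) :
    IsProbabilityMeasure (iterComp F l s x) := by
  induction l generalizing s x with
  | zero => exact Measure.dirac.isProbabilityMeasure
  | succ l ih =>
    constructor
    simp only [iterComp_succ_apply hF l s x MeasurableSet.univ, measure_univ, lintegral_one]

end IterComp

section Backward

set_option linter.unusedSectionVars false

variable {Q : Kernel X X} {g : X → Y → ℝ≥0∞} {y : ℕ → Y} {n : ℕ}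

lemma measurable_backward [IsSFiniteKernel Q] (hg : Measurable (Function.uncurry g))
    (k : ℕ) : Measurable (backward Q g y n k) := by
  suffices ∀ m, Measurable (backwardAux Q g y n m) from this (n - k)
  intro m
  induction m with
  | zero => exact measurable_const
  | succ m ih =>
    exact Measurable.lintegral_kernel_prod_right
      ((hg.of_uncurry_right.mul ih).comp measurable_snd)

lemma backward_of_lt {k : ℕ} (hkn : k < n) (x : X) :
    backward Q g y n k x
      = ∫⁻ x', g x' (y (k + 1)) * backward Q g y n (k + 1) x' ∂Q x := by
  rw [backward, show n - k = n - (k + 1) + 1 by omega, backwardAux,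
    show n - (n - (k + 1)) = k + 1 by omega]
  rfl

lemma backward_self (x : X) : backward Q g y n n x = 1 := by
  simp [backward, backwardAux]

/-- The integrand `h_e` in `β_{e|n}(x) = ∫ Q(x,dz) h_e(z)`; setting `h_n ≡ 1` makes this hold
at `e = n` as well. -/
def backwardIntegrand (Q : Kernel X X) (g : X → Y → ℝ≥0∞) (y : ℕ → Y) (n e : ℕ) (z : X) :
    ℝ≥0∞ :=
  if e < n then g z (y (e + 1)) * backward Q g y n (e + 1) z else 1

lemma measurable_backwardIntegrand [IsSFiniteKernel Q] (hg : Measurable (Function.uncurry g))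
    (e : ℕ) : Measurable (backwardIntegrand Q g y n e) := by
  unfold backwardIntegrand
  split_ifs
  exacts [hg.of_uncurry_right.mul (measurable_backward hg _), measurable_const]

lemma lintegral_backwardIntegrand [IsMarkovKernel Q] {e : ℕ} (he : e ≤ n) (x : X) :
    ∫⁻ z, backwardIntegrand Q g y n e z ∂Q x = backward Q g y n e x := by
  rcases he.lt_or_eq with hen | rfl
  · simp only [backwardIntegrand, if_pos hen, backward_of_lt hen]
  · simp [backwardIntegrand, backward_self]

lemma forwardKernel_of_lt {k : ℕ} (hkn : k < n) {x : X} (hβ : backward Q g y n k x ≠ 0) :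
    forwardKernel Q g y n k x = (backward Q g y n k x)⁻¹ •
      ((Q x).withDensity fun x' => g x' (y (k + 1)) * backward Q g y n (k + 1) x') := by
  rw [forwardKernel, if_pos hkn, if_pos hβ]

lemma measurable_forwardKernel [IsSFiniteKernel Q] (hg : Measurable (Function.uncurry g))
    (k : ℕ) : Measurable (forwardKernel Q g y n k) := by
  by_cases hkn : k < n
  · have hβ := measurable_backward (Q := Q) (y := y) (n := n) hg
    have hρ : Measurable (Function.uncurry fun (_ : X) x' =>
        g x' (y (k + 1)) * backward Q g y n (k + 1) x') :=
      (hg.of_uncurry_right.mul (hβ _)).comp measurable_snd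
    unfold forwardKernel
    simp only [if_pos hkn]
    refine Measurable.ite ((hβ k) (measurableSet_singleton 0).compl) ?_ measurable_const
    refine Measure.measurable_of_measurable_coe _ fun s hs => ?_
    simp only [Measure.smul_apply, smul_eq_mul, ← Kernel.withDensity_apply Q hρ]
    exact (hβ k).inv.mul (Kernel.measurable_coe _ hs)
  · unfold forwardKernel
    simpa only [if_neg hkn] using Q.measurable

lemma isProbabilityMeasure_forwardKernel [IsMarkovKernel Q]
    (hβ_pos : ∀ j x, 0 < backward Q g y n j x) (hβ_fin : ∀ j x, backward Q g y n j x < ⊤)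
    (k : ℕ) (x : X) : IsProbabilityMeasure (forwardKernel Q g y n k x) := by
  by_cases hkn : k < n
  · constructor
    rw [forwardKernel_of_lt hkn (hβ_pos k x).ne', Measure.smul_apply, smul_eq_mul,
      withDensity_apply _ MeasurableSet.univ, setLIntegral_univ, ← backward_of_lt hkn]
    exact ENNReal.inv_mul_cancel (hβ_pos k x).ne' (hβ_fin k x).ne
  · simp only [forwardKernel, if_neg hkn]
    infer_instance

lemma backward_mul_lintegral_forwardKernel [IsSFiniteKernel Q]
    (hg : Measurable (Function.uncurry g)) {k : ℕ} (hkn : k < n) {x : X}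
    (hβ_pos : backward Q g y n k x ≠ 0) (hβ_fin : backward Q g y n k x ≠ ⊤)
    {f : X → ℝ≥0∞} (hf : Measurable f) :
    backward Q g y n k x * ∫⁻ x', f x' ∂forwardKernel Q g y n k x
      = ∫⁻ x', g x' (y (k + 1)) * backward Q g y n (k + 1) x' * f x' ∂Q x := by
  have hρ : Measurable fun x' => g x' (y (k + 1)) * backward Q g y n (k + 1) x' :=
    hg.of_uncurry_right.mul (measurable_backward hg _)
  rw [forwardKernel_of_lt hkn hβ_pos, lintegral_smul_measure, smul_eq_mul, ← mul_assoc,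
    ENNReal.mul_inv_cancel hβ_pos hβ_fin, one_mul,
    lintegral_withDensity_eq_lintegral_mul _ hρ hf]
  rfl

end Backward

section Wfun

variable {μ : Measure X} {q : X → X → ℝ≥0∞} {g : X → Y → ℝ≥0∞} {C : Set X}

lemma measurable_Wfun [SigmaFinite μ] (hq : Measurable (Function.uncurry q))
    (hg : Measurable (Function.uncurry g)) (hC : MeasurableSet C) (l : ℕ) (ys : ℕ → Y) :
    Measurable fun p : X × X => Wfun q g μ l ys p.1 p.2 C := by
  induction l generalizing ys with
  | zero => exact ((measurable_one.indicator hC).comp measurable_fst).mul hq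
  | succ l ih =>
    refine Measurable.lintegral_prod_right (f := fun (p : X × X) x1 =>
      q p.1 x1 * g x1 (ys 1) * Wfun q g μ l (fun i => ys (i + 1)) x1 p.2 C) ?_
    exact ((hq.comp (measurable_fst.fst.prodMk measurable_snd)).mul
      (hg.of_uncurry_right.comp measurable_snd)).mul
      ((ih _).comp (measurable_snd.prodMk measurable_fst.snd))

lemma lintegral_mul_Wfun_succ [SigmaFinite μ] (hq : Measurable (Function.uncurry q))
    (hg : Measurable (Function.uncurry g)) (hC : MeasurableSet C) {h : X → ℝ≥0∞}
    (hh : Measurable h) (l : ℕ) (ys : ℕ → Y) (x : X) :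
    ∫⁻ z, h z * Wfun q g μ (l + 1) ys x z C ∂μ
      = ∫⁻ x1, q x x1 * g x1 (ys 1) *
          ∫⁻ z, h z * Wfun q g μ l (fun i => ys (i + 1)) x1 z C ∂μ ∂μ := by
  have hW := measurable_Wfun (μ := μ) hq hg hC l (fun i => ys (i + 1))
  have hF : Measurable (Function.uncurry fun z x1 =>
      q x x1 * g x1 (ys 1) * (h z * Wfun q g μ l (fun i => ys (i + 1)) x1 z C)) :=
    ((hq.of_uncurry_left.mul hg.of_uncurry_right).comp measurable_snd).mul
      ((hh.comp measurable_fst).mul (hW.comp measurable_swap))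
  calc ∫⁻ z, h z * Wfun q g μ (l + 1) ys x z C ∂μ
      = ∫⁻ z, ∫⁻ x1, q x x1 * g x1 (ys 1) *
          (h z * Wfun q g μ l (fun i => ys (i + 1)) x1 z C) ∂μ ∂μ := by
        refine lintegral_congr fun z => ?_
        have hmeas : Measurable fun x1 =>
            q x x1 * g x1 (ys 1) * Wfun q g μ l (fun i => ys (i + 1)) x1 z C :=
          (hq.of_uncurry_left.mul hg.of_uncurry_right).mul
            (hW.comp (measurable_id.prodMk measurable_const))
        rw [Wfun, ← lintegral_const_mul _ hmeas]
        exact lintegral_congr fun x1 => by ring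
    _ = _ := by
        rw [lintegral_lintegral_swap hF.aemeasurable]
        exact lintegral_congr fun x1 =>
          lintegral_const_mul _ (hh.mul (hW.comp (measurable_const.prodMk measurable_id)))

end Wfun

lemma backward_mul_iterComp_forwardKernel_apply {μ : Measure X} [SigmaFinite μ]
    {q : X → X → ℝ≥0∞} (hq : Measurable (Function.uncurry q))
    {Q : Kernel X X} [IsMarkovKernel Q] (hQq : ∀ x : X, Q x = μ.withDensity (q x))
    {g : X → Y → ℝ≥0∞} (hg : Measurable (Function.uncurry g)) {y : ℕ → Y} {n : ℕ}
    (hβ_pos : ∀ j x, 0 < backward Q g y n j x) (hβ_fin : ∀ j x, backward Q g y n j x < ⊤)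
    {C : Set X} (hC : MeasurableSet C) (l k : ℕ) (hk : k + l ≤ n) (x : X) :
    backward Q g y n k x * iterComp (forwardKernel Q g y n) l k x C
      = ∫⁻ z, backwardIntegrand Q g y n (k + l) z *
          Wfun q g μ l (fun i => y (k + i)) x z C ∂μ := by
  induction l generalizing k x with
  | zero =>
    have hqx : Measurable (q x) := hq.of_uncurry_left
    have hβ : ∫⁻ z, q x z * backwardIntegrand Q g y n k z ∂μ = backward Q g y n k x := by
      rw [← lintegral_backwardIntegrand (by omega) x, hQq x,
        lintegral_withDensity_eq_lintegral_mul μ hqx (measurable_backwardIntegrand hg k)]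
      rfl
    calc backward Q g y n k x * iterComp (forwardKernel Q g y n) 0 k x C
        = (∫⁻ z, q x z * backwardIntegrand Q g y n k z ∂μ) * C.indicator (fun _ => 1) x := by
          rw [hβ, iterComp, Measure.dirac_apply' x hC]
          rfl
      _ = ∫⁻ z, q x z * backwardIntegrand Q g y n k z * C.indicator (fun _ => 1) x ∂μ :=
          (lintegral_mul_const _ (hqx.mul (measurable_backwardIntegrand hg k))).symm
      _ = _ := lintegral_congr fun z => by simp only [Wfun, add_zero]; ring
  | succ l ih =>
    have hkn : k < n := by omega
    have hF := measurable_forwardKernel (Q := Q) (y := y) (n := n) hg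
    have hiter : Measurable fun x1 => iterComp (forwardKernel Q g y n) l (k + 1) x1 C :=
      (Measure.measurable_coe hC).comp (measurable_iterComp hF l (k + 1))
    have hρ : Measurable fun x1 => g x1 (y (k + 1)) * backward Q g y n (k + 1) x1 *
        iterComp (forwardKernel Q g y n) l (k + 1) x1 C :=
      (hg.of_uncurry_right.mul (measurable_backward hg _)).mul hiter
    rw [iterComp_succ_apply hF l k x hC, backward_mul_lintegral_forwardKernel hg hkn
      (hβ_pos k x).ne' (hβ_fin k x).ne hiter, lintegral_mul_Wfun_succ hq hg hC
      (measurable_backwardIntegrand hg _), hQq x,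
      lintegral_withDensity_eq_lintegral_mul μ hq.of_uncurry_left hρ]
    refine lintegral_congr fun x1 => ?_
    have hys : (fun i => y (k + 1 + i)) = fun i => y (k + (i + 1)) :=
      funext fun i => by rw [add_assoc, add_comm 1 i]
    rw [Pi.mul_apply, mul_assoc, ← add_assoc, add_right_comm, ← hys, ← ih (k + 1) (by omega) x1]
    ring

theorem uniform_accessibility_general
    (μ : Measure X) [SigmaFinite μ]
    (q : X → X → ℝ≥0∞) (hq : Measurable (Function.uncurry q))
    (Q : Kernel X X) [IsMarkovKernel Q]
    (hQq : ∀ x : X, (Q x : Measure X) = μ.withDensity (q x))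
    (g : X → Y → ℝ≥0∞) (hg : Measurable (Function.uncurry g))
    (y : ℕ → Y) (n l k : ℕ) (hk : k + l ≤ n)
    (hβ_pos : ∀ j x, 0 < backward Q g y n j x)
    (hβ_fin : ∀ j x, backward Q g y n j x < ⊤)
    (C : Set X) (hC : MeasurableSet C) :
    ∀ x : X,
      (⨅ x0 : X, ⨅ xe : X,
          Wfun q g μ l (fun i => y (k + i)) x0 xe C /
            Wfun q g μ l (fun i => y (k + i)) x0 xe Set.univ) ≤
        iterComp (forwardKernel Q g y n) l k x C := by
  intro x
  set α := ⨅ x0 : X, ⨅ xe : X, Wfun q g μ l (fun i => y (k + i)) x0 xe C /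
    Wfun q g μ l (fun i => y (k + i)) x0 xe Set.univ
  have := isProbabilityMeasure_iterComp (measurable_forwardKernel hg)
    (isProbabilityMeasure_forwardKernel hβ_pos hβ_fin) l k x
  have hαW : ∀ z, α * Wfun q g μ l (fun i => y (k + i)) x z Set.univ
      ≤ Wfun q g μ l (fun i => y (k + i)) x z C :=
    fun z => ENNReal.mul_le_of_le_div ((iInf_le _ x).trans (iInf_le _ z))
  refine (ENNReal.mul_le_mul_iff_right (hβ_pos k x).ne' (hβ_fin k x).ne).mp ?_
  calc backward Q g y n k x * α
      = α * (backward Q g y n k x * iterComp (forwardKernel Q g y n) l k x Set.univ) := by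
        rw [measure_univ, mul_one, mul_comm]
    _ = α * ∫⁻ z, backwardIntegrand Q g y n (k + l) z *
          Wfun q g μ l (fun i => y (k + i)) x z Set.univ ∂μ := by
        rw [backward_mul_iterComp_forwardKernel_apply hq hQq hg hβ_pos hβ_fin
          MeasurableSet.univ l k hk]
    _ ≤ ∫⁻ z, α * (backwardIntegrand Q g y n (k + l) z *
          Wfun q g μ l (fun i => y (k + i)) x z Set.univ) ∂μ := lintegral_const_mul_le _ _
    _ ≤ ∫⁻ z, backwardIntegrand Q g y n (k + l) z *
          Wfun q g μ l (fun i => y (k + i)) x z C ∂μ :=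
        lintegral_mono fun z => by rw [mul_left_comm]; gcongr; exact hαW z
    _ = backward Q g y n k x * iterComp (forwardKernel Q g y n) l k x C :=
        (backward_mul_iterComp_forwardKernel_apply hq hQq hg hβ_pos hβ_fin hC l k hk x).symm

/-- Uniform accessibility: for `ℓ ≥ 1`, `k + ℓ ≤ n`, positive backward
functions and positive normalizations `W(…;X)`, every measurable set `C` satisfies
`inf_x (F_{k+ℓ−1|n} ∘ ⋯ ∘ F_{k|n})(x,C) ≥ α(y_{k+1:k+ℓ};C)`, where
`α(y_{1:ℓ};C) = inf_{x₀,x_{ℓ+1}} W[y_{1:ℓ}](x₀,x_{ℓ+1};C)/W[y_{1:ℓ}](x₀,x_{ℓ+1};X)`. -/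
theorem uniform_accessibility
    (μ : Measure X) [SigmaFinite μ]
    (q : X → X → ℝ≥0∞) (hq : Measurable (Function.uncurry q))
    (Q : Kernel X X) [IsMarkovKernel Q]
    (hQq : ∀ x : X, (Q x : Measure X) = μ.withDensity (q x))
    (g : X → Y → ℝ≥0∞) (hg : Measurable (Function.uncurry g))
    (hg_pos : ∀ x yy, 0 < g x yy) (hg_fin : ∀ x yy, g x yy < ⊤)
    (y : ℕ → Y) (n l k : ℕ) (hl : 1 ≤ l) (hk : k + l ≤ n)
    (hβ_pos : ∀ j x, 0 < backward Q g y n j x)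
    (hβ_fin : ∀ j x, backward Q g y n j x < ⊤)
    (hW_pos : ∀ x0 xe : X, 0 < Wfun q g μ l (fun i => y (k + i)) x0 xe Set.univ)
    (C : Set X) (hC : MeasurableSet C) :
    ∀ x : X,
      (⨅ x0 : X, ⨅ xe : X,
          Wfun q g μ l (fun i => y (k + i)) x0 xe C /
            Wfun q g μ l (fun i => y (k + i)) x0 xe Set.univ) ≤
        iterComp (forwardKernel Q g y n) l k x C :=
  uniform_accessibility_general μ q hq Q hQq g hg y n l k hk hβ_pos hβ_fin C hC

end
end

section
/- Let C ⊆ ℝ be a nonempty bounded set and z_0 ∈ C. Define D := diam(a(C)), ε(C) := min{ γ p_U(D), inf_{0≤u≤D+M} p_U(u), (sup_{0≤u≤D+M} p_U(u))^{−1} }, and h_C(x_1) := 1 if dist(x_1, a(C)) ≤ M and h_C(x_1) := p_U(|x_1 − a(z_0)|) otherwise. Then for all x_0 ∈ C and all x_1 ∈ ℝ, ε(C) h_C(x_1) ≤ p_U(|x_1 − a(x_0)|) ≤ ε(C)^{−1} h_C(x_1). -/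
/-!
On the near region `dist(x₁, a(C)) ≤ M` every distance `|x₁ − a(x₀)|` lies in `[0, D + M]`, where
`p_U` is pinched between its infimum and supremum, both positive. On the far region all these
distances are at least `M`, where `p_U` is nonincreasing, and they differ by at most `D`; so the
quasi-submultiplicativity `γ p_U(s) p_U(D) ≤ p_U(s + D)` compares any two of them up to the factor
`γ p_U(D)`.
-/

open Set Metric Bornology

/-- The constant `ε(C)` of the paper, with `D = diam(a(C))`. -/
noncomputable def minorizationConst (p : ℝ → ℝ) (γ M D : ℝ) : ℝ :=
  min (γ * p D) (min (sInf (p '' Icc 0 (D + M))) (sSup (p '' Icc 0 (D + M)))⁻¹)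

section

variable {p : ℝ → ℝ} {M γ : ℝ}

lemma bddBelow_image_Icc_zero (hpos : ∀ u, 0 ≤ u → 0 < p u) (b : ℝ) :
    BddBelow (p '' Icc 0 b) :=
  ⟨0, by rintro _ ⟨u, hu, rfl⟩; exact (hpos u hu.1).le⟩

lemma bddAbove_image_Icc_zero (hbdd : ∃ B, ∀ u, 0 ≤ u → p u ≤ B) (b : ℝ) :
    BddAbove (p '' Icc 0 b) := by
  obtain ⟨B, hB⟩ := hbdd
  exact ⟨B, by rintro _ ⟨u, hu, rfl⟩; exact hB u hu.1⟩

lemma sInf_image_Icc_zero_pos (hpos : ∀ u, 0 ≤ u → 0 < p u)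
    (hlow : ∃ m > 0, ∀ u ∈ Icc 0 M, m ≤ p u) (hanti : ∀ s t, M ≤ s → s ≤ t → p t ≤ p s)
    {b : ℝ} (hb : 0 ≤ b) : 0 < sInf (p '' Icc 0 b) := by
  obtain ⟨m, hm, hmp⟩ := hlow
  have hmin : min m (p b) ≤ sInf (p '' Icc 0 b) := by
    refine le_csInf ⟨p 0, mem_image_of_mem p ⟨le_rfl, hb⟩⟩ ?_
    rintro _ ⟨u, hu, rfl⟩
    rcases le_or_gt u M with huM | hMu
    · exact (min_le_left _ _).trans (hmp u ⟨hu.1, huM⟩)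
    · exact (min_le_right _ _).trans (hanti u b hMu.le hu.2)
  exact (lt_min hm (hpos b hb)).trans_le hmin

lemma sSup_image_Icc_zero_pos (hpos : ∀ u, 0 ≤ u → 0 < p u)
    (hbdd : ∃ B, ∀ u, 0 ≤ u → p u ≤ B) {b : ℝ} (hb : 0 ≤ b) : 0 < sSup (p '' Icc 0 b) :=
  (hpos 0 le_rfl).trans_le <|
    le_csSup (bddAbove_image_Icc_zero hbdd b) (mem_image_of_mem p ⟨le_rfl, hb⟩)

lemma minorizationConst_pos (hγ : 0 < γ) (hpos : ∀ u, 0 ≤ u → 0 < p u)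
    (hbdd : ∃ B, ∀ u, 0 ≤ u → p u ≤ B) (hlow : ∃ m > 0, ∀ u ∈ Icc 0 M, m ≤ p u)
    (hanti : ∀ s t, M ≤ s → s ≤ t → p t ≤ p s) {D : ℝ} (hD : 0 ≤ D) (hDM : 0 ≤ D + M) :
    0 < minorizationConst p γ M D :=
  lt_min (mul_pos hγ (hpos D hD))
    (lt_min (sInf_image_Icc_zero_pos hpos hlow hanti hDM)
      (inv_pos.mpr (sSup_image_Icc_zero_pos hpos hbdd hDM)))

lemma minorizationConst_le_and_le_inv (hγ : 0 < γ) (hpos : ∀ u, 0 ≤ u → 0 < p u)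
    (hbdd : ∃ B, ∀ u, 0 ≤ u → p u ≤ B) (hlow : ∃ m > 0, ∀ u ∈ Icc 0 M, m ≤ p u)
    (hanti : ∀ s t, M ≤ s → s ≤ t → p t ≤ p s) {D u : ℝ} (hD : 0 ≤ D)
    (hu : u ∈ Icc 0 (D + M)) :
    minorizationConst p γ M D ≤ p u ∧ p u ≤ (minorizationConst p γ M D)⁻¹ := by
  have hDM : 0 ≤ D + M := hu.1.trans hu.2
  have hε := minorizationConst_pos hγ hpos hbdd hlow hanti hD hDM
  have hmem : p u ∈ p '' Icc 0 (D + M) := mem_image_of_mem p hu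
  constructor
  · exact ((min_le_right _ _).trans (min_le_left _ _)).trans
      (csInf_le (bddBelow_image_Icc_zero hpos _) hmem)
  · have hεsSup : minorizationConst p γ M D ≤ (sSup (p '' Icc 0 (D + M)))⁻¹ :=
      (min_le_right _ _).trans (min_le_right _ _)
    calc p u ≤ sSup (p '' Icc 0 (D + M)) := le_csSup (bddAbove_image_Icc_zero hbdd _) hmem
      _ ≤ (minorizationConst p γ M D)⁻¹ := by simpa using inv_anti₀ hε hεsSup

lemma mul_le_apply_of_le_add (hanti : ∀ s t, M ≤ s → s ≤ t → p t ≤ p s)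
    (hmult : ∀ s t, 0 ≤ s → 0 ≤ t → γ * p s * p t ≤ p (s + t)) {s t D : ℝ}
    (hs : 0 ≤ s) (hD : 0 ≤ D) (ht : M ≤ t) (hts : t ≤ s + D) : γ * p D * p s ≤ p t :=
  calc γ * p D * p s = γ * p s * p D := by ring
    _ ≤ p (s + D) := hmult s D hs hD
    _ ≤ p t := hanti t (s + D) ht hts

lemma le_mul_and_le_inv_mul {ε c x y : ℝ} (hε : 0 < ε) (hεc : ε ≤ c) (hy : 0 ≤ y)
    (hxy : c * y ≤ x) (hyx : c * x ≤ y) : ε * y ≤ x ∧ x ≤ ε⁻¹ * y := by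
  have hc : 0 < c := hε.trans_le hεc
  refine ⟨(mul_le_mul_of_nonneg_right hεc hy).trans hxy, ?_⟩
  calc x ≤ c⁻¹ * y := (le_inv_mul_iff₀ hc).mpr hyx
    _ ≤ ε⁻¹ * y := mul_le_mul_of_nonneg_right (inv_anti₀ hε hεc) hy

variable {X : Type*} [PseudoMetricSpace X] {S : Set X} {x y y₀ : X}

lemma minorizationConst_le_and_le_inv_of_infDist_le (hγ : 0 < γ)
    (hpos : ∀ u, 0 ≤ u → 0 < p u) (hbdd : ∃ B, ∀ u, 0 ≤ u → p u ≤ B)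
    (hlow : ∃ m > 0, ∀ u ∈ Icc 0 M, m ≤ p u) (hanti : ∀ s t, M ≤ s → s ≤ t → p t ≤ p s)
    (hS : IsBounded S) (hy : y ∈ S) (hnear : infDist x S ≤ M) :
    minorizationConst p γ M (diam S) ≤ p (dist x y) ∧
      p (dist x y) ≤ (minorizationConst p γ M (diam S))⁻¹ := by
  refine minorizationConst_le_and_le_inv hγ hpos hbdd hlow hanti diam_nonneg ⟨dist_nonneg, ?_⟩
  linarith [dist_le_infDist_add_diam (x := x) hS hy]

lemma minorizationConst_mul_le_and_le_inv_mul_of_le_infDist (hγ : 0 < γ)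
    (hpos : ∀ u, 0 ≤ u → 0 < p u) (hbdd : ∃ B, ∀ u, 0 ≤ u → p u ≤ B)
    (hlow : ∃ m > 0, ∀ u ∈ Icc 0 M, m ≤ p u) (hanti : ∀ s t, M ≤ s → s ≤ t → p t ≤ p s)
    (hmult : ∀ s t, 0 ≤ s → 0 ≤ t → γ * p s * p t ≤ p (s + t))
    (hS : IsBounded S) (hy : y ∈ S) (hy₀ : y₀ ∈ S) (hfar : M ≤ infDist x S) (hM : 0 ≤ M) :
    minorizationConst p γ M (diam S) * p (dist x y₀) ≤ p (dist x y) ∧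
      p (dist x y) ≤ (minorizationConst p γ M (diam S))⁻¹ * p (dist x y₀) := by
  have hD : 0 ≤ diam S := diam_nonneg
  have compare : ∀ {z z'}, z ∈ S → z' ∈ S →
      γ * p (diam S) * p (dist x z') ≤ p (dist x z) := fun hz hz' =>
    mul_le_apply_of_le_add hanti hmult dist_nonneg hD
      (hfar.trans (infDist_le_dist_of_mem hz))
      ((dist_triangle x _ _).trans (by gcongr; exact dist_le_diam_of_mem hS hz' hz))
  exact le_mul_and_le_inv_mul (minorizationConst_pos hγ hpos hbdd hlow hanti hD (by linarith))
    (min_le_left _ _) (hpos _ dist_nonneg).le (compare hy hy₀) (compare hy₀ hy)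

end

theorem strong_small_set_FAR_general
    (M γ : ℝ) (hM : 0 < M) (hγ : 0 < γ)
    (pU : ℝ → ℝ)
    (hpU_pos : ∀ u, 0 ≤ u → 0 < pU u)
    (hpU_bdd : ∃ Bd : ℝ, ∀ u, 0 ≤ u → pU u ≤ Bd)
    (hpU_low : ∃ md > 0, ∀ u ∈ Set.Icc (0 : ℝ) M, md ≤ pU u)
    (hpU_anti : ∀ s t : ℝ, M ≤ s → s ≤ t → pU t ≤ pU s)
    (hpU_mult : ∀ s t : ℝ, 0 ≤ s → 0 ≤ t → γ * pU s * pU t ≤ pU (s + t))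
    (a : ℝ → ℝ) (aplus : ℝ) (haLip : ∀ x x' : ℝ, |a x - a x'| ≤ aplus * |x - x'|)
    (C : Set ℝ) (hCbdd : Bornology.IsBounded C)
    (z₀ : ℝ) (hz₀ : z₀ ∈ C) :
    ∀ x₀ ∈ C, ∀ x₁ : ℝ,
      min (γ * pU (Metric.diam (a '' C)))
            (min (sInf (pU '' Set.Icc 0 (Metric.diam (a '' C) + M)))
              (sSup (pU '' Set.Icc 0 (Metric.diam (a '' C) + M)))⁻¹) *
          (if Metric.infDist x₁ (a '' C) ≤ M then 1 else pU |x₁ - a z₀|) ≤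
        pU |x₁ - a x₀| ∧
      pU |x₁ - a x₀| ≤
        (min (γ * pU (Metric.diam (a '' C)))
            (min (sInf (pU '' Set.Icc 0 (Metric.diam (a '' C) + M)))
              (sSup (pU '' Set.Icc 0 (Metric.diam (a '' C) + M)))⁻¹))⁻¹ *
          (if Metric.infDist x₁ (a '' C) ≤ M then 1 else pU |x₁ - a z₀|) := by
  intro x₀ hx₀ x₁
  have hLip : LipschitzWith (Real.toNNReal aplus) a :=
    .of_dist_le' (by simpa only [Real.dist_eq] using haLip)
  have hS : IsBounded (a '' C) := hLip.isBounded_image hCbdd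
  have hy := mem_image_of_mem a hx₀
  rw [← Real.dist_eq, ← Real.dist_eq]
  change minorizationConst pU γ M _ * _ ≤ _ ∧ _ ≤ (minorizationConst pU γ M _)⁻¹ * _
  split_ifs with hnear
  · simpa only [mul_one] using minorizationConst_le_and_le_inv_of_infDist_le hγ hpU_pos hpU_bdd
      hpU_low hpU_anti hS hy hnear
  · exact minorizationConst_mul_le_and_le_inv_mul_of_le_infDist hγ hpU_pos hpU_bdd hpU_low
      hpU_anti hpU_mult hS hy (mem_image_of_mem a hz₀) (not_le.mp hnear).le hM.le

/-- In the scalar functional autoregressive model, for any nonempty bounded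
`C ⊆ ℝ` and `z₀ ∈ C`, with `D = diam(a(C))`,
`ε(C) = min{γ p_U(D), inf_{0≤u≤D+M} p_U(u), (sup_{0≤u≤D+M} p_U(u))⁻¹}` and
`h_C(x₁) = 1` if `dist(x₁, a(C)) ≤ M`, `= p_U(|x₁ − a(z₀)|)` otherwise, one has
`ε(C) h_C(x₁) ≤ p_U(|x₁ − a(x₀)|) ≤ ε(C)⁻¹ h_C(x₁)` for all `x₀ ∈ C` and `x₁ ∈ ℝ`. -/
theorem strong_small_set_FAR
    (M γ : ℝ) (hM : 0 < M) (hγ : 0 < γ)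
    (pU : ℝ → ℝ)
    (hpU_pos : ∀ u, 0 ≤ u → 0 < pU u)
    (hpU_bdd : ∃ Bd : ℝ, ∀ u, 0 ≤ u → pU u ≤ Bd)
    (hpU_low : ∃ md > 0, ∀ u ∈ Set.Icc (0 : ℝ) M, md ≤ pU u)
    (hpU_anti : ∀ s t : ℝ, M ≤ s → s ≤ t → pU t ≤ pU s)
    (hpU_mult : ∀ s t : ℝ, 0 ≤ s → 0 ≤ t → γ * pU s * pU t ≤ pU (s + t))
    (a : ℝ → ℝ) (aplus : ℝ) (haLip : ∀ x x' : ℝ, |a x - a x'| ≤ aplus * |x - x'|)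
    (C : Set ℝ) (hCne : C.Nonempty) (hCbdd : Bornology.IsBounded C)
    (z₀ : ℝ) (hz₀ : z₀ ∈ C) :
    ∀ x₀ ∈ C, ∀ x₁ : ℝ,
      min (γ * pU (Metric.diam (a '' C)))
            (min (sInf (pU '' Set.Icc 0 (Metric.diam (a '' C) + M)))
              (sSup (pU '' Set.Icc 0 (Metric.diam (a '' C) + M)))⁻¹) *
          (if Metric.infDist x₁ (a '' C) ≤ M then 1 else pU |x₁ - a z₀|) ≤
        pU |x₁ - a x₀| ∧
      pU |x₁ - a x₀| ≤
        (min (γ * pU (Metric.diam (a '' C)))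
            (min (sInf (pU '' Set.Icc 0 (Metric.diam (a '' C) + M)))
              (sSup (pU '' Set.Icc 0 (Metric.diam (a '' C) + M)))⁻¹))⁻¹ *
          (if Metric.infDist x₁ (a '' C) ≤ M then 1 else pU |x₁ - a z₀|) :=
  strong_small_set_FAR_general M γ hM hγ pU hpU_pos hpU_bdd hpU_low hpU_anti hpU_mult a aplus haLip
    C hCbdd z₀ hz₀
end

section
/- Let C ⊆ ℝ be a nonempty bounded set and z_1 ∈ C. Define ν(C) := min{ γ p_U(diam(C)), inf_{0≤u≤diam(C)+M} p_U(u) } and k_C(x_0) := 1 if dist(a(x_0), C) < M and k_C(x_0) := p_U(|z_1 − a(x_0)|) otherwise. Then for all x_0 ∈ ℝ and all x_1 ∈ C, p_U(|x_1 − a(x_0)|) ≥ ν(C) k_C(x_0). -/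
/-!
If `a x₀` lies within `M` of `C`, then every `x₁ ∈ C` lies within `diam C + M` of `a x₀`, so
`p_U |x₁ - a x₀|` dominates the infimum of `p_U` over `[0, diam C + M]`. Otherwise
`M ≤ |x₁ - a x₀| ≤ diam C + |z₁ - a x₀|`, and supermultiplicativity followed by antitonicity of
`p_U` beyond `M` gives `γ p_U(diam C) p_U |z₁ - a x₀| ≤ p_U |x₁ - a x₀|`.
-/

open scoped Classical

open Metric Set

theorem mul_le_of_superMul_of_antitoneOn {M γ : ℝ} {p : ℝ → ℝ} (hanti : AntitoneOn p (Ici M))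
    (hmul : ∀ s t : ℝ, 0 ≤ s → 0 ≤ t → γ * p s * p t ≤ p (s + t))
    {d s t : ℝ} (hd : 0 ≤ d) (hs : 0 ≤ s) (hMt : M ≤ t) (ht : t ≤ d + s) :
    γ * p d * p s ≤ p t :=
  (hmul d s hd hs).trans (hanti hMt (hMt.trans ht) ht)

theorem csInf_image_Icc_le {p : ℝ → ℝ} (hp : ∀ u, 0 ≤ u → 0 ≤ p u) {R t : ℝ}
    (ht : t ∈ Icc 0 R) : sInf (p '' Icc 0 R) ≤ p t :=
  csInf_le ⟨0, forall_mem_image.2 fun u hu => hp u hu.1⟩ (mem_image_of_mem p ht)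

theorem decomposability_FAR_general
    (M γ : ℝ)
    (pU : ℝ → ℝ)
    (hpU_pos : ∀ u, 0 ≤ u → 0 < pU u)
    (hpU_anti : ∀ s t : ℝ, M ≤ s → s ≤ t → pU t ≤ pU s)
    (hpU_mult : ∀ s t : ℝ, 0 ≤ s → 0 ≤ t → γ * pU s * pU t ≤ pU (s + t))
    (a : ℝ → ℝ)
    (C : Set ℝ) (hCbdd : Bornology.IsBounded C)
    (z₁ : ℝ) (hz₁ : z₁ ∈ C) :
    ∀ x₀ : ℝ, ∀ x₁ ∈ C,
      min (γ * pU (Metric.diam C)) (sInf (pU '' Set.Icc 0 (Metric.diam C + M))) *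
          (if Metric.infDist (a x₀) C < M then 1 else pU |z₁ - a x₀|) ≤
        pU |x₁ - a x₀| := by
  intro x₀ x₁ hx₁
  rw [← Real.dist_eq, ← Real.dist_eq]
  split_ifs with hnear
  · have hx₁_near : dist x₁ (a x₀) ≤ infDist (a x₀) C + diam C := by
      rw [dist_comm]; exact dist_le_infDist_add_diam hCbdd hx₁
    rw [mul_one]
    refine (min_le_right _ _).trans
      (csInf_image_Icc_le (fun u hu => (hpU_pos u hu).le) ⟨dist_nonneg, ?_⟩)
    linarith
  · have hMx₁ : M ≤ dist x₁ (a x₀) :=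
      (not_lt.1 hnear).trans ((infDist_le_dist_of_mem hx₁).trans_eq (dist_comm _ _))
    have hx₁_far : dist x₁ (a x₀) ≤ diam C + dist z₁ (a x₀) :=
      (dist_triangle _ z₁ _).trans (add_le_add_left (dist_le_diam_of_mem hCbdd hx₁ hz₁) _)
    calc min (γ * pU (diam C)) (sInf (pU '' Icc 0 (diam C + M))) * pU (dist z₁ (a x₀))
        ≤ γ * pU (diam C) * pU (dist z₁ (a x₀)) :=
          mul_le_mul_of_nonneg_right (min_le_left _ _) (hpU_pos _ dist_nonneg).le
      _ ≤ pU (dist x₁ (a x₀)) :=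
          mul_le_of_superMul_of_antitoneOn (fun s hs t _ hst => hpU_anti s t hs hst) hpU_mult
            diam_nonneg dist_nonneg hMx₁ hx₁_far

/-- In the scalar functional autoregressive model, for any nonempty bounded
`C ⊆ ℝ` and `z₁ ∈ C`, with `ν(C) = min{γ p_U(diam C), inf_{0≤u≤diam C+M} p_U(u)}` and
`k_C(x₀) = 1` if `dist(a(x₀), C) < M`, `= p_U(|z₁ − a(x₀)|)` otherwise, one has
`p_U(|x₁ − a(x₀)|) ≥ ν(C) k_C(x₀)` for all `x₀ ∈ ℝ` and `x₁ ∈ C`. -/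
theorem decomposability_FAR
    (M γ : ℝ) (hM : 0 < M) (hγ : 0 < γ)
    (pU : ℝ → ℝ)
    (hpU_pos : ∀ u, 0 ≤ u → 0 < pU u)
    (hpU_bdd : ∃ Bd : ℝ, ∀ u, 0 ≤ u → pU u ≤ Bd)
    (hpU_low : ∃ md > 0, ∀ u ∈ Set.Icc (0 : ℝ) M, md ≤ pU u)
    (hpU_anti : ∀ s t : ℝ, M ≤ s → s ≤ t → pU t ≤ pU s)
    (hpU_mult : ∀ s t : ℝ, 0 ≤ s → 0 ≤ t → γ * pU s * pU t ≤ pU (s + t))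
    (a : ℝ → ℝ) (aplus : ℝ) (haLip : ∀ x x' : ℝ, |a x - a x'| ≤ aplus * |x - x'|)
    (C : Set ℝ) (hCne : C.Nonempty) (hCbdd : Bornology.IsBounded C)
    (z₁ : ℝ) (hz₁ : z₁ ∈ C) :
    ∀ x₀ : ℝ, ∀ x₁ ∈ C,
      min (γ * pU (Metric.diam C)) (sInf (pU '' Set.Icc 0 (Metric.diam C + M))) *
          (if Metric.infDist (a x₀) C < M then 1 else pU |z₁ - a x₀|) ≤
        pU |x₁ - a x₀| :=
  decomposability_FAR_general M γ pU hpU_pos hpU_anti hpU_mult a C hCbdd z₁ hz₁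
end

section
/- There exist K_0 > 0 and δ > 0 such that for all K ≥ K_0 and all y ∈ ℝ, ∫_{C_K(y)} p_V(|y − b(x)|) dx ≥ δ; equivalently, lim_{K→∞} inf_{y∈ℝ} ∫_{C_K(y)} p_V(|y − b(x)|) dx > 0. -/
open MeasureTheory Set

/-! Since `b' ≥ b₋`, at distance at least `M / b₋` to the right of `b⁻¹ y` the observation error
`|y - b x|` is at least `M`, where `p_V` is nonincreasing; on a window of length one there it is
at most `b₁ K₀` with `K₀ = M / b₋ + 1`. Hence `p_V(|y - b x|) ≥ p_V(b₁ K₀) > 0` on an interval of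
length one contained in `C_K(y)` for every `K ≥ K₀`, uniformly in `y`. -/

lemma abs_sub_mem_Icc_of_mul_sub_le {b : ℝ → ℝ} {c C : ℝ} (hc : 0 < c) (hC : 0 ≤ C)
    (hlow : ∀ ⦃x z⦄, x ≤ z → c * (z - x) ≤ b z - b x)
    (hup : ∀ ⦃x z⦄, x ≤ z → b z - b x ≤ C * (z - x))
    {M K x₀ x : ℝ} (hM : 0 ≤ M) (hx : x ∈ Icc (x₀ + M / c) (x₀ + K)) :
    |b x₀ - b x| ∈ Icc M (C * K) := by
  obtain ⟨hx₁, hx₂⟩ := hx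
  have hx₀x : x₀ ≤ x := le_trans (by simpa using div_nonneg hM hc.le) hx₁
  rw [abs_sub_comm, abs_of_nonneg (by linarith [hlow hx₀x, mul_nonneg hc.le (sub_nonneg.2 hx₀x)])]
  constructor
  · calc M = c * (M / c) := by field_simp
      _ ≤ c * (x - x₀) := by gcongr; linarith
      _ ≤ b x - b x₀ := hlow hx₀x
  · calc b x - b x₀ ≤ C * (x - x₀) := hup hx₀x
      _ ≤ C * K := by gcongr; linarith

theorem integral_obs_density_bounded_below_general
    (M : ℝ) (hM : 0 < M)
    (b : ℝ → ℝ) (b' : ℝ → ℝ) (bminus b₁ : ℝ) (hbminus : 0 < bminus)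
    (hb_deriv : ∀ x, HasDerivAt b (b' x) x)
    (hb'_low : ∀ x, bminus ≤ b' x) (hb'_up : ∀ x, b' x ≤ b₁)
    (hb_bij : Function.Bijective b)
    (pV : ℝ → ℝ)
    (hpV_pos : ∀ u, 0 ≤ u → 0 < pV u)
    (hpV_bdd : ∃ Bd : ℝ, ∀ u, 0 ≤ u → pV u ≤ Bd)
    (hpV_lsc : LowerSemicontinuousOn pV (Set.Ici 0))
    (hpV_anti : ∀ s t : ℝ, M ≤ s → s ≤ t → pV t ≤ pV s) :
    ∃ K₀ > 0, ∃ δ > 0, ∀ K ≥ K₀, ∀ y : ℝ,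
      δ ≤ ∫ x in {x : ℝ | |x - Function.invFun b y| ≤ K}, pV |y - b x| := by
  have hb : Differentiable ℝ b := fun x => (hb_deriv x).differentiableAt
  have hlow := mul_sub_le_image_sub_of_le_deriv hb fun x => (hb_deriv x).deriv ▸ hb'_low x
  have hup := image_sub_le_mul_sub_of_deriv_le hb fun x => (hb_deriv x).deriv ▸ hb'_up x
  have hb₁ : 0 ≤ b₁ := hbminus.le.trans ((hb'_low 0).trans (hb'_up 0))
  obtain ⟨Bd, hBd⟩ := hpV_bdd
  set K₀ := M / bminus + 1
  refine ⟨K₀, by positivity, pV (b₁ * K₀), hpV_pos _ (by positivity), fun K hK y => ?_⟩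
  set x₀ := Function.invFun b y
  have hy : b x₀ = y := Function.rightInverse_invFun hb_bij.surjective y
  set S := Icc (x₀ + M / bminus) (x₀ + K₀)
  set T := {x : ℝ | |x - x₀| ≤ K}
  have hST : S ⊆ T := fun x ⟨h₁, h₂⟩ => by
    have : 0 ≤ M / bminus := by positivity
    show |x - x₀| ≤ K
    rw [abs_of_nonneg (by linarith)]
    linarith
  have hf_lsc : LowerSemicontinuous fun x => pV |y - b x| :=
    lowerSemicontinuousOn_univ_iff.1 <| hpV_lsc.comp
      (continuous_const.sub hb.continuous).abs.continuousOn fun _ _ => mem_Ici.2 (abs_nonneg _)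
  have hT : volume T ≠ ⊤ := by
    have : T = Metric.closedBall x₀ K := by ext; simp [T, Real.dist_eq]
    simp [this, Real.volume_closedBall, ENNReal.mul_eq_top]
  have hf_int : IntegrableOn (fun x => pV |y - b x|) T :=
    Measure.integrableOn_of_bounded hT hf_lsc.measurable.aestronglyMeasurable
      (M := Bd) <| ae_of_all _ fun x => by
        rw [Real.norm_of_nonneg (hpV_pos _ (abs_nonneg _)).le]
        exact hBd _ (abs_nonneg _)
  calc pV (b₁ * K₀) = pV (b₁ * K₀) * volume.real S := by simp [S, K₀]
    _ ≤ ∫ x in S, pV |y - b x| := by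
      refine setIntegral_ge_of_const_le_real measurableSet_Icc (by simp [S]) (fun x hx => ?_)
        (hf_int.mono_set hST)
      obtain ⟨h₁, h₂⟩ := abs_sub_mem_Icc_of_mul_sub_le hbminus hb₁ hlow hup hM.le hx
      rw [hy] at h₁ h₂
      exact hpV_anti _ _ h₁ h₂
    _ ≤ ∫ x in T, pV |y - b x| :=
      setIntegral_mono_set hf_int (ae_of_all _ fun x => (hpV_pos _ (abs_nonneg _)).le)
        hST.eventuallyLE

/-- In the scalar observation model, there exist `K₀ > 0` and `δ > 0`
such that for all `K ≥ K₀` and all `y ∈ ℝ`, `∫_{C_K(y)} p_V(|y − b(x)|) dx ≥ δ`, where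
`C_K(y) = {x : |x − b⁻¹(y)| ≤ K}`. -/
theorem integral_obs_density_bounded_below
    (M : ℝ) (hM : 0 < M)
    (b : ℝ → ℝ) (b' : ℝ → ℝ) (bminus b₁ : ℝ) (hbminus : 0 < bminus) (hb₁ : bminus ≤ b₁)
    (hb_deriv : ∀ x, HasDerivAt b (b' x) x)
    (hb'_low : ∀ x, bminus ≤ b' x) (hb'_up : ∀ x, b' x ≤ b₁)
    (hb_bij : Function.Bijective b)
    (pV : ℝ → ℝ)
    (hpV_pos : ∀ u, 0 ≤ u → 0 < pV u)
    (hpV_bdd : ∃ Bd : ℝ, ∀ u, 0 ≤ u → pV u ≤ Bd)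
    (hpV_lsc : LowerSemicontinuousOn pV (Set.Ici 0))
    (hpV_anti : ∀ s t : ℝ, M ≤ s → s ≤ t → pV t ≤ pV s)
    (hpV_int : Integrable (fun x : ℝ => pV |x|))
    (hpV_one : ∫ x : ℝ, pV |x| = 1) :
    ∃ K₀ > 0, ∃ δ > 0, ∀ K ≥ K₀, ∀ y : ℝ,
      δ ≤ ∫ x in {x : ℝ | |x - Function.invFun b y| ≤ K}, pV |y - b x| :=
  integral_obs_density_bounded_below_general M hM b b' bminus b₁ hbminus hb_deriv hb'_low hb'_up
    hb_bij pV hpV_pos hpV_bdd hpV_lsc hpV_anti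
end

section
/- Assume Υ := ∫_0^∞ p_U(x)^{−1} p_V(b_− x) p_U(a_+ x)^{−1} dx < ∞. Then limsup_{K→∞} sup_{y∈ℝ} sup_{(x_0,x_2)∈ℝ×ℝ} I_K(x_0,x_2;y) < ∞. -/
open MeasureTheory
open scoped Classical

noncomputable section

/-- `C_K(y) = {x ∈ ℝ : |x − b⁻¹(y)| ≤ K}`. -/
def CKset (b : ℝ → ℝ) (K y : ℝ) : Set ℝ :=
  {x : ℝ | |x - Function.invFun b y| ≤ K}

/-- `h_{C_K(y)}(x) = 1` if `dist(x, a(C_K(y))) ≤ M`, and `= p_U(|x − a(b⁻¹(y))|)` otherwise. -/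
def hCfun (pU a b : ℝ → ℝ) (M K y x : ℝ) : ℝ :=
  if Metric.infDist x (a '' CKset b K y) ≤ M then 1 else pU |x - a (Function.invFun b y)|

/-- `k_{C_K(y)}(x) = 1` if `dist(a(x), C_K(y)) < M`, and `= p_U(|b⁻¹(y) − a(x)|)` otherwise. -/
def kCfun (pU a b : ℝ → ℝ) (M K y x : ℝ) : ℝ :=
  if Metric.infDist (a x) (CKset b K y) < M then 1 else pU |Function.invFun b y - a x|

/-- `I_K(x₀,x₂;y) = k_{C_K(y)}(x₀)⁻¹ h_{C_K(y)}(x₂)⁻¹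
∫_{ℝ∖C_K(y)} p_U(|x₁ − a(x₀)|) p_V(|y − b(x₁)|) p_U(|x₂ − a(x₁)|) dx₁`. -/
def IK (pU pV a b : ℝ → ℝ) (M K x₀ x₂ y : ℝ) : ℝ :=
  (kCfun pU a b M K y x₀)⁻¹ * (hCfun pU a b M K y x₂)⁻¹ *
    ∫ x₁ in (CKset b K y)ᶜ, pU |x₁ - a x₀| * pV |y - b x₁| * pU |x₂ - a x₁|

/-!
Put `z = b⁻¹(y)` and `u = |x₁ − z| > K`. Supermultiplicativity of `p_U` together with its
nonincreasing tail gives `p_U(|x₁ − a(x₀)|) ≲ k_{C_K(y)}(x₀) p_U(u)⁻¹` (split `|z − a(x₀)|` at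
`x₁`) and `p_U(|x₂ − a(x₁)|) ≲ h_{C_K(y)}(x₂) p_U(a₊ u)⁻¹` (split `|x₂ − a(z)|` at `a(x₁)`), while
`|y − b(x₁)| ≥ b₋ u ≥ M` once `b₋ K ≥ M`, so `p_V(|y − b(x₁)|) ≤ p_V(b₋ u)`. Hence the integrand
of `I_K` is at most `k h` times a constant times `F(u)`, where `F` is the integrand of `Υ`, and the
integral of `F(|x₁ − z|)` over the whole line is `2Υ`.
-/
open Set

theorem integrable_comp_abs {E : Type*} [NormedAddCommGroup E] {f : ℝ → E}
    (hf : IntegrableOn f (Ioi 0)) : Integrable (fun x => f |x|) := by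
  have hIoi : IntegrableOn (fun x => f |x|) (Ioi 0) :=
    hf.congr_fun (fun x hx => by rw [abs_of_pos hx]) measurableSet_Ioi
  have hIic : IntegrableOn (fun x => f |x|) (Iic 0) := by
    have hneg : MeasurableEmbedding fun x : ℝ => -x := (Homeomorph.neg ℝ).measurableEmbedding
    rw [← Measure.map_neg_eq_self (volume : Measure ℝ), hneg.integrableOn_map_iff]
    simp_rw [Function.comp_def, abs_neg, neg_preimage, neg_Iic, neg_zero]
    exact (integrableOn_Ici_iff_integrableOn_Ioi).2 hIoi
  rw [← integrableOn_univ, ← Iic_union_Ioi]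
  exact hIic.union hIoi

theorem setIntegral_le_of_le_mul_comp_abs_sub {f F : ℝ → ℝ} {s : Set ℝ} {z C : ℝ}
    (hs : MeasurableSet s) (hF : IntegrableOn F (Ioi 0)) (hF_nonneg : ∀ u, 0 ≤ u → 0 ≤ F u)
    (hf_nonneg : ∀ x, 0 ≤ f x) (hC : 0 ≤ C) (hfF : ∀ x ∈ s, f x ≤ C * F |x - z|) :
    ∫ x in s, f x ≤ C * (2 * ∫ u in Ioi 0, F u) := by
  have hFz : Integrable (fun x => F |x - z|) := (integrable_comp_abs hF).comp_sub_right z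
  calc ∫ x in s, f x
      ≤ ∫ x in s, C * F |x - z| :=
        integral_mono_of_nonneg (.of_forall hf_nonneg) (hFz.const_mul C).integrableOn
          ((ae_restrict_iff' hs).2 (.of_forall hfF))
    _ = C * ∫ x in s, F |x - z| := integral_const_mul _ _
    _ ≤ C * ∫ x, F |x - z| := mul_le_mul_of_nonneg_left
        (setIntegral_le_integral hFz (.of_forall fun _ => hF_nonneg _ (abs_nonneg _))) hC
    _ = C * (2 * ∫ u in Ioi 0, F u) := by
        rw [integral_sub_right_eq_self (fun x => F |x|), integral_comp_abs]

theorem mul_abs_sub_le_abs_sub_of_le_deriv {f f' : ℝ → ℝ} {m : ℝ}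
    (hf : ∀ x, HasDerivAt f (f' x) x) (hf' : ∀ x, m ≤ f' x) (x y : ℝ) :
    m * |x - y| ≤ |f x - f y| := by
  wlog hyx : y ≤ x generalizing x y
  · rw [abs_sub_comm, abs_sub_comm (f x)]
    exact this y x (le_of_not_ge hyx)
  have hmono : m * (x - y) ≤ f x - f y :=
    mul_sub_le_image_sub_of_le_deriv (fun t => (hf t).differentiableAt)
      (fun t => (hf t).deriv ▸ hf' t) hyx
  rw [abs_of_nonneg (sub_nonneg.mpr hyx)]
  exact hmono.trans (le_abs_self _)

theorem mul_le_inv_mul_of_le_add {p : ℝ → ℝ} {M γ : ℝ} (hγ : 0 < γ)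
    (hp_anti : ∀ s t : ℝ, M ≤ s → s ≤ t → p t ≤ p s)
    (hp_mult : ∀ s t : ℝ, 0 ≤ s → 0 ≤ t → γ * p s * p t ≤ p (s + t))
    {s t r : ℝ} (hs : 0 ≤ s) (ht : 0 ≤ t) (hr : M ≤ r) (hrst : r ≤ s + t) :
    p s * p t ≤ γ⁻¹ * p r := by
  rw [le_inv_mul_iff₀ hγ, ← mul_assoc]
  exact (hp_mult s t hs ht).trans (hp_anti r (s + t) hr hrst)

/-- `k_{C_K(y)}` and `h_{C_K(y)}` both have this shape. -/
theorem mul_le_max_mul_ite {p : ℝ → ℝ} {M γ B : ℝ} (hγ : 0 < γ)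
    (hp_pos : ∀ u, 0 ≤ u → 0 < p u) (hp_bdd : ∀ u, 0 ≤ u → p u ≤ B)
    (hp_anti : ∀ s t : ℝ, M ≤ s → s ≤ t → p t ≤ p s)
    (hp_mult : ∀ s t : ℝ, 0 ≤ s → 0 ≤ t → γ * p s * p t ≤ p (s + t))
    {P : Prop} [Decidable P] {s t r : ℝ} (hs : 0 ≤ s) (ht : 0 ≤ t)
    (hr : ¬P → M ≤ r) (hrst : r ≤ s + t) :
    p s * p t ≤ max γ⁻¹ (B ^ 2) * if P then 1 else p r := by
  split_ifs with hP
  · have hB : 0 ≤ B := (hp_pos 0 le_rfl).le.trans (hp_bdd 0 le_rfl)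
    calc p s * p t ≤ B * B :=
          mul_le_mul (hp_bdd s hs) (hp_bdd t ht) (hp_pos t ht).le hB
      _ = B ^ 2 := (sq B).symm
      _ ≤ max γ⁻¹ (B ^ 2) * 1 := by rw [mul_one]; exact le_max_right _ _
  · have hpr : 0 ≤ p r :=
      (hp_pos _ (add_nonneg hs ht)).le.trans (hp_anti r (s + t) (hr hP) hrst)
    calc p s * p t ≤ γ⁻¹ * p r := mul_le_inv_mul_of_le_add hγ hp_anti hp_mult hs ht (hr hP) hrst
      _ ≤ max γ⁻¹ (B ^ 2) * p r := by gcongr; exact le_max_left _ _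

theorem nonneg_of_abs_sub_le_mul {a : ℝ → ℝ} {L : ℝ}
    (ha : ∀ x x' : ℝ, |a x - a x'| ≤ L * |x - x'|) : 0 ≤ L := by
  simpa using (abs_nonneg _).trans (ha 1 0)

theorem invFun_mem_CKset (b : ℝ → ℝ) {K : ℝ} (hK : 0 ≤ K) (y : ℝ) :
    Function.invFun b y ∈ CKset b K y := by
  simpa [CKset] using hK

theorem measurableSet_CKset (b : ℝ → ℝ) (K y : ℝ) : MeasurableSet (CKset b K y) :=
  measurableSet_le (by fun_prop) measurable_const

theorem kCfun_pos {pU : ℝ → ℝ} (hpU_pos : ∀ u, 0 ≤ u → 0 < pU u) (a b : ℝ → ℝ) (M K y x : ℝ) :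
    0 < kCfun pU a b M K y x := by
  unfold kCfun
  split_ifs
  exacts [one_pos, hpU_pos _ (abs_nonneg _)]

theorem hCfun_pos {pU : ℝ → ℝ} (hpU_pos : ∀ u, 0 ≤ u → 0 < pU u) (a b : ℝ → ℝ) (M K y x : ℝ) :
    0 < hCfun pU a b M K y x := by
  unfold hCfun
  split_ifs
  exacts [one_pos, hpU_pos _ (abs_nonneg _)]

theorem pU_mul_pU_le_mul_kCfun {pU a b : ℝ → ℝ} {M γ B K : ℝ} (hγ : 0 < γ)
    (hpU_pos : ∀ u, 0 ≤ u → 0 < pU u) (hpU_bdd : ∀ u, 0 ≤ u → pU u ≤ B)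
    (hpU_anti : ∀ s t : ℝ, M ≤ s → s ≤ t → pU t ≤ pU s)
    (hpU_mult : ∀ s t : ℝ, 0 ≤ s → 0 ≤ t → γ * pU s * pU t ≤ pU (s + t))
    (hK : 0 ≤ K) (y x₀ x₁ : ℝ) :
    pU |x₁ - a x₀| * pU |x₁ - Function.invFun b y| ≤
      max γ⁻¹ (B ^ 2) * kCfun pU a b M K y x₀ := by
  set z := Function.invFun b y
  rw [kCfun]
  refine mul_le_max_mul_ite hγ hpU_pos hpU_bdd hpU_anti hpU_mult (abs_nonneg _) (abs_nonneg _)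
    (fun hfar => ?_) ?_
  · calc M ≤ Metric.infDist (a x₀) (CKset b K y) := not_lt.mp hfar
      _ ≤ dist (a x₀) z := Metric.infDist_le_dist_of_mem (invFun_mem_CKset b hK y)
      _ = |z - a x₀| := by rw [Real.dist_eq, abs_sub_comm]
  · calc |z - a x₀| ≤ |z - x₁| + |x₁ - a x₀| := abs_sub_le _ _ _
      _ = |x₁ - a x₀| + |x₁ - z| := by rw [abs_sub_comm z, add_comm]

theorem pU_mul_pU_le_mul_hCfun {pU a b : ℝ → ℝ} {M γ B K aplus : ℝ} (hγ : 0 < γ)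
    (hpU_pos : ∀ u, 0 ≤ u → 0 < pU u) (hpU_bdd : ∀ u, 0 ≤ u → pU u ≤ B)
    (hpU_anti : ∀ s t : ℝ, M ≤ s → s ≤ t → pU t ≤ pU s)
    (hpU_mult : ∀ s t : ℝ, 0 ≤ s → 0 ≤ t → γ * pU s * pU t ≤ pU (s + t))
    (haLip : ∀ x x' : ℝ, |a x - a x'| ≤ aplus * |x - x'|) (hK : 0 ≤ K) (y x₁ x₂ : ℝ) :
    pU |x₂ - a x₁| * pU (aplus * |x₁ - Function.invFun b y|) ≤
      max γ⁻¹ (B ^ 2) * hCfun pU a b M K y x₂ := by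
  set z := Function.invFun b y
  rw [hCfun]
  refine mul_le_max_mul_ite hγ hpU_pos hpU_bdd hpU_anti hpU_mult (abs_nonneg _)
    (mul_nonneg (nonneg_of_abs_sub_le_mul haLip) (abs_nonneg _)) (fun hfar => ?_) ?_
  · calc M ≤ Metric.infDist x₂ (a '' CKset b K y) := (not_le.mp hfar).le
      _ ≤ dist x₂ (a z) := Metric.infDist_le_dist_of_mem ⟨z, invFun_mem_CKset b hK y, rfl⟩
      _ = |x₂ - a z| := Real.dist_eq _ _
  · calc |x₂ - a z| ≤ |x₂ - a x₁| + |a x₁ - a z| := abs_sub_le _ _ _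
      _ ≤ |x₂ - a x₁| + aplus * |x₁ - z| := by gcongr; exact haLip x₁ z

theorem pV_le_of_notMem_CKset {pV b b' : ℝ → ℝ} {M bminus K : ℝ}
    (hpV_anti : ∀ s t : ℝ, M ≤ s → s ≤ t → pV t ≤ pV s)
    (hb_deriv : ∀ x, HasDerivAt b (b' x) x) (hb'_low : ∀ x, bminus ≤ b' x)
    (hb_surj : Function.Surjective b) (hbminus : 0 ≤ bminus) (hK : M ≤ bminus * K)
    {y x₁ : ℝ} (hx₁ : x₁ ∉ CKset b K y) :
    pV |y - b x₁| ≤ pV (bminus * |x₁ - Function.invFun b y|) := by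
  have hfar : K < |x₁ - Function.invFun b y| := not_le.mp hx₁
  refine hpV_anti _ _ (hK.trans (by gcongr)) ?_
  calc bminus * |x₁ - Function.invFun b y|
      ≤ |b x₁ - b (Function.invFun b y)| :=
        mul_abs_sub_le_abs_sub_of_le_deriv hb_deriv hb'_low _ _
    _ = |y - b x₁| := by rw [Function.rightInverse_invFun hb_surj y, abs_sub_comm]

def upsilonDensity (pU pV : ℝ → ℝ) (aplus bminus u : ℝ) : ℝ :=
  (pU u)⁻¹ * pV (bminus * u) * (pU (aplus * u))⁻¹

theorem upsilonDensity_nonneg {pU pV : ℝ → ℝ} {aplus bminus : ℝ}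
    (hpU_pos : ∀ u, 0 ≤ u → 0 < pU u) (hpV_pos : ∀ u, 0 ≤ u → 0 < pV u)
    (haplus : 0 ≤ aplus) (hbminus : 0 ≤ bminus) {u : ℝ} (hu : 0 ≤ u) :
    0 ≤ upsilonDensity pU pV aplus bminus u := by
  have := hpU_pos u hu
  have := hpV_pos (bminus * u) (by positivity)
  have := hpU_pos (aplus * u) (by positivity)
  unfold upsilonDensity
  positivity

theorem integrand_le_mul_kCfun_mul_hCfun {pU pV a b b' : ℝ → ℝ} {M γ B K aplus bminus : ℝ}
    (hγ : 0 < γ) (hpU_pos : ∀ u, 0 ≤ u → 0 < pU u) (hpU_bdd : ∀ u, 0 ≤ u → pU u ≤ B)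
    (hpU_anti : ∀ s t : ℝ, M ≤ s → s ≤ t → pU t ≤ pU s)
    (hpU_mult : ∀ s t : ℝ, 0 ≤ s → 0 ≤ t → γ * pU s * pU t ≤ pU (s + t))
    (haLip : ∀ x x' : ℝ, |a x - a x'| ≤ aplus * |x - x'|)
    (hb_deriv : ∀ x, HasDerivAt b (b' x) x) (hb'_low : ∀ x, bminus ≤ b' x)
    (hb_surj : Function.Surjective b) (hbminus : 0 ≤ bminus)
    (hpV_pos : ∀ u, 0 ≤ u → 0 < pV u) (hpV_anti : ∀ s t : ℝ, M ≤ s → s ≤ t → pV t ≤ pV s)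
    (hK : 0 ≤ K) (hMK : M ≤ bminus * K) {y x₀ x₁ x₂ : ℝ} (hx₁ : x₁ ∉ CKset b K y) :
    pU |x₁ - a x₀| * pV |y - b x₁| * pU |x₂ - a x₁| ≤
      max γ⁻¹ (B ^ 2) ^ 2 * kCfun pU a b M K y x₀ * hCfun pU a b M K y x₂ *
        upsilonDensity pU pV aplus bminus |x₁ - Function.invFun b y| := by
  set c := max γ⁻¹ (B ^ 2)
  set u := |x₁ - Function.invFun b y|
  have hc : 0 < c := lt_max_of_lt_left (inv_pos.2 hγ)
  have hk := kCfun_pos hpU_pos a b M K y x₀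
  have hpUu := hpU_pos u (abs_nonneg _)
  have hpUau := hpU_pos (aplus * u) (mul_nonneg (nonneg_of_abs_sub_le_mul haLip) (abs_nonneg _))
  have hpVu := hpV_pos (bminus * u) (mul_nonneg hbminus (abs_nonneg _))
  have hA : pU |x₁ - a x₀| ≤ c * kCfun pU a b M K y x₀ * (pU u)⁻¹ :=
    (le_mul_inv_iff₀ hpUu).2 (pU_mul_pU_le_mul_kCfun hγ hpU_pos hpU_bdd hpU_anti hpU_mult hK y x₀ x₁)
  have hC : pU |x₂ - a x₁| ≤ c * hCfun pU a b M K y x₂ * (pU (aplus * u))⁻¹ :=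
    (le_mul_inv_iff₀ hpUau).2
      (pU_mul_pU_le_mul_hCfun hγ hpU_pos hpU_bdd hpU_anti hpU_mult haLip hK y x₁ x₂)
  have hV := pV_le_of_notMem_CKset hpV_anti hb_deriv hb'_low hb_surj hbminus hMK hx₁
  calc pU |x₁ - a x₀| * pV |y - b x₁| * pU |x₂ - a x₁|
      ≤ c * kCfun pU a b M K y x₀ * (pU u)⁻¹ * pV (bminus * u) *
          (c * hCfun pU a b M K y x₂ * (pU (aplus * u))⁻¹) :=
        mul_le_mul (mul_le_mul hA hV (hpV_pos _ (abs_nonneg _)).le (by positivity)) hC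
          (hpU_pos _ (abs_nonneg _)).le (by positivity)
    _ = _ := by unfold upsilonDensity; ring

theorem IK_uniformly_bounded_general
    (M γ aplus : ℝ) (hM : 0 < M) (hγ : 0 < γ)
    (pU : ℝ → ℝ)
    (hpU_pos : ∀ u, 0 ≤ u → 0 < pU u)
    (hpU_bdd : ∃ Bd : ℝ, ∀ u, 0 ≤ u → pU u ≤ Bd)
    (hpU_anti : ∀ s t : ℝ, M ≤ s → s ≤ t → pU t ≤ pU s)
    (hpU_mult : ∀ s t : ℝ, 0 ≤ s → 0 ≤ t → γ * pU s * pU t ≤ pU (s + t))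
    (a : ℝ → ℝ) (haLip : ∀ x x' : ℝ, |a x - a x'| ≤ aplus * |x - x'|)
    (b : ℝ → ℝ) (b' : ℝ → ℝ) (bminus : ℝ) (hbminus : 0 < bminus)
    (hb_deriv : ∀ x, HasDerivAt b (b' x) x)
    (hb'_low : ∀ x, bminus ≤ b' x)
    (hb_bij : Function.Bijective b)
    (pV : ℝ → ℝ)
    (hpV_pos : ∀ u, 0 ≤ u → 0 < pV u)
    (hpV_anti : ∀ s t : ℝ, M ≤ s → s ≤ t → pV t ≤ pV s)
    (hUpsilon : IntegrableOn
      (fun x : ℝ => (pU x)⁻¹ * pV (bminus * x) * (pU (aplus * x))⁻¹) (Set.Ioi 0)) :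
    ∃ Cb : ℝ, ∃ K₀ : ℝ, ∀ K ≥ K₀, ∀ y x₀ x₂ : ℝ,
      IK pU pV a b M K x₀ x₂ y ≤ Cb := by
  obtain ⟨B, hB⟩ := hpU_bdd
  set c := max γ⁻¹ (B ^ 2)
  set Υ := ∫ u in Ioi 0, upsilonDensity pU pV aplus bminus u
  refine ⟨c ^ 2 * (2 * Υ), M / bminus, fun K hK y x₀ x₂ => ?_⟩
  have hMK : M ≤ bminus * K := (div_le_iff₀' hbminus).1 hK
  have hK0 : 0 ≤ K := (div_pos hM hbminus).le.trans hK
  set k := kCfun pU a b M K y x₀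
  set h := hCfun pU a b M K y x₂
  have hk : 0 < k := kCfun_pos hpU_pos a b M K y x₀
  have hh : 0 < h := hCfun_pos hpU_pos a b M K y x₂
  rw [IK, ← mul_inv, inv_mul_le_iff₀ (mul_pos hk hh)]
  calc _ ≤ c ^ 2 * k * h * (2 * Υ) :=
        setIntegral_le_of_le_mul_comp_abs_sub (measurableSet_CKset b K y).compl hUpsilon
          (fun u => upsilonDensity_nonneg hpU_pos hpV_pos (nonneg_of_abs_sub_le_mul haLip)
            hbminus.le)
          (fun x₁ => mul_nonneg (mul_nonneg (hpU_pos _ (abs_nonneg _)).le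
            (hpV_pos _ (abs_nonneg _)).le) (hpU_pos _ (abs_nonneg _)).le)
          (by positivity)
          (fun x₁ hx₁ => integrand_le_mul_kCfun_mul_hCfun hγ hpU_pos hB hpU_anti hpU_mult haLip
            hb_deriv hb'_low hb_bij.2 hbminus.le hpV_pos hpV_anti hK0 hMK hx₁)
    _ = k * h * (c ^ 2 * (2 * Υ)) := by ring

/-- If `Υ = ∫_0^∞ p_U(x)⁻¹ p_V(b₋ x) p_U(a₊ x)⁻¹ dx < ∞`, then
`limsup_{K→∞} sup_y sup_{x₀,x₂} I_K(x₀,x₂;y) < ∞`. -/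
theorem IK_uniformly_bounded
    (M γ aplus : ℝ) (hM : 0 < M) (hγ : 0 < γ)
    (pU : ℝ → ℝ)
    (hpU_pos : ∀ u, 0 ≤ u → 0 < pU u)
    (hpU_bdd : ∃ Bd : ℝ, ∀ u, 0 ≤ u → pU u ≤ Bd)
    (hpU_low : ∃ md > 0, ∀ u ∈ Set.Icc (0 : ℝ) M, md ≤ pU u)
    (hpU_anti : ∀ s t : ℝ, M ≤ s → s ≤ t → pU t ≤ pU s)
    (hpU_mult : ∀ s t : ℝ, 0 ≤ s → 0 ≤ t → γ * pU s * pU t ≤ pU (s + t))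
    (a : ℝ → ℝ) (haLip : ∀ x x' : ℝ, |a x - a x'| ≤ aplus * |x - x'|)
    (b : ℝ → ℝ) (b' : ℝ → ℝ) (bminus b₁ : ℝ) (hbminus : 0 < bminus) (hb₁ : bminus ≤ b₁)
    (hb_deriv : ∀ x, HasDerivAt b (b' x) x)
    (hb'_low : ∀ x, bminus ≤ b' x) (hb'_up : ∀ x, b' x ≤ b₁)
    (hb_bij : Function.Bijective b)
    (pV : ℝ → ℝ)
    (hpV_pos : ∀ u, 0 ≤ u → 0 < pV u)
    (hpV_bdd : ∃ Bd : ℝ, ∀ u, 0 ≤ u → pV u ≤ Bd)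
    (hpV_lsc : LowerSemicontinuousOn pV (Set.Ici 0))
    (hpV_anti : ∀ s t : ℝ, M ≤ s → s ≤ t → pV t ≤ pV s)
    (hpV_int : Integrable (fun x : ℝ => pV |x|))
    (hUpsilon : IntegrableOn
      (fun x : ℝ => (pU x)⁻¹ * pV (bminus * x) * (pU (aplus * x))⁻¹) (Set.Ioi 0)) :
    ∃ Cb : ℝ, ∃ K₀ : ℝ, ∀ K ≥ K₀, ∀ y x₀ x₂ : ℝ,
      IK pU pV a b M K x₀ x₂ y ≤ Cb :=
  IK_uniformly_bounded_general M γ aplus hM hγ pU hpU_pos hpU_bdd hpU_anti hpU_mult a haLip b b'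
    bminus hbminus hb_deriv hb'_low hb_bij pV hpV_pos hpV_anti hUpsilon
end
end

section
/- Let Z be a real-valued random variable with probability density function f with respect to Lebesgue measure such that log f is twice differentiable and satisfies (log f)''(x) ≤ −c for all x ∈ ℝ, where c > 0. Then Z is square integrable and Var(Z) ≤ c^{−1}. -/
/-!
Write `ψ = log f`. The bound `ψ'' ≤ -c` makes `ψ'` strongly decreasing,
`(x - y) (ψ' x - ψ' y) ≤ -c (x - y)²`. Comparing `ψ` with its tangent parabola at `0` gives a
Gaussian bound `f x ≤ K exp (-c x² / 4)`, so all moments of `f` are finite and `x f x → 0` at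
`±∞`. For the mean `m`, the derivative of `(x - m) f x` is
`f + (x - m) ψ' f ≤ f + ψ' m (x - m) f - c (x - m)² f`; integrating over `ℝ`, the boundary terms
vanish and the right-hand side integrates to `1 - c Var(Z)`.
-/

open MeasureTheory Real Filter Topology

theorem hasDerivAt_of_hasDerivAt_log {f : ℝ → ℝ} {d x : ℝ} (hf : ∀ t, 0 < f t)
    (hlog : HasDerivAt (fun t => log (f t)) d x) : HasDerivAt f (d * f x) x := by
  have h := hlog.exp
  simp only [exp_log (hf _)] at h
  rwa [mul_comm] at h

theorem sub_mul_sub_le_of_hasDerivAt_le {g g' : ℝ → ℝ} {c : ℝ}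
    (hg : ∀ x, HasDerivAt g (g' x) x) (hle : ∀ x, g' x ≤ -c) (x y : ℝ) :
    (x - y) * (g x - g y) ≤ -c * (x - y) ^ 2 := by
  have hanti : Antitone fun t => g t + c * t :=
    antitone_of_hasDerivAt_nonpos (f' := fun t => g' t + c * 1)
      (fun t => (hg t).add ((hasDerivAt_id' t).const_mul c))
      fun t => by simp only [Pi.zero_apply, mul_one]; linarith [hle t]
  have hanti_xy := (antivary_id_iff.2 hanti).sub_mul_sub_nonpos y x
  simp only [id] at hanti_xy
  linarith

theorem le_of_hasDerivAt_of_sub_mul_nonpos {u u' : ℝ → ℝ} {y : ℝ}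
    (hu : ∀ t, HasDerivAt u (u' t) t) (hsign : ∀ t, (t - y) * u' t ≤ 0) (x : ℝ) :
    u x ≤ u y := by
  have hcont : Continuous u := continuous_iff_continuousAt.2 fun t => (hu t).continuousAt
  rcases lt_trichotomy x y with hxy | rfl | hxy
  · obtain ⟨ξ, ⟨-, hξy⟩, hξ⟩ := exists_hasDerivAt_eq_slope u u' hxy hcont.continuousOn
      fun t _ => hu t
    have hξ_nonneg : 0 ≤ u' ξ := nonneg_of_mul_nonpos_right (hsign ξ) (by linarith)
    rw [hξ, le_div_iff₀ (sub_pos.2 hxy)] at hξ_nonneg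
    linarith
  · rfl
  · obtain ⟨ξ, ⟨hyξ, -⟩, hξ⟩ := exists_hasDerivAt_eq_slope u u' hxy hcont.continuousOn
      fun t _ => hu t
    have hξ_nonpos : u' ξ ≤ 0 := nonpos_of_mul_nonpos_right (hsign ξ) (by linarith)
    rw [hξ, div_le_iff₀ (sub_pos.2 hxy)] at hξ_nonpos
    linarith

theorem le_mul_exp_neg_mul_sq_of_strongly_log_concave {f l' : ℝ → ℝ} {c : ℝ}
    (hf : ∀ x, 0 < f x) (hl' : ∀ x, HasDerivAt (fun t => log (f t)) (l' x) x)
    (hstrong : ∀ x y, (x - y) * (l' x - l' y) ≤ -c * (x - y) ^ 2) (hc : 0 < c) (x : ℝ) :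
    f x ≤ f 0 * exp (l' 0 ^ 2 / c) * exp (-(c / 4) * x ^ 2) := by
  have hu (t : ℝ) : HasDerivAt (fun t => log (f t) - l' 0 * t + c / 2 * t ^ 2)
      (l' t - l' 0 + c * t) t := by
    refine (((hl' t).sub ((hasDerivAt_id' t).const_mul (l' 0))).add
      (((hasDerivAt_id' t).pow 2).const_mul (c / 2))).congr_deriv ?_
    push_cast
    ring
  have hmax : log (f x) - l' 0 * x + c / 2 * x ^ 2 ≤ log (f 0) :=
    (le_of_hasDerivAt_of_sub_mul_nonpos hu (fun t => by nlinarith [hstrong t 0]) x).trans_eq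
      (by simp)
  have hamgm : l' 0 * x ≤ l' 0 ^ 2 / c + c / 4 * x ^ 2 := by
    rw [div_add' _ _ _ hc.ne', le_div_iff₀ hc]
    nlinarith [sq_nonneg (l' 0 - c / 2 * x)]
  rw [← exp_log (hf x), ← exp_log (hf 0), ← exp_add, ← exp_add]
  exact exp_le_exp.2 (by linarith)

section GaussianDomination

variable {f : ℝ → ℝ} {K b : ℝ}

theorem integrable_pow_mul_of_abs_le_gaussian (hb : 0 < b)
    (hf : ∀ x, |f x| ≤ K * exp (-b * x ^ 2)) (hmeas : AEStronglyMeasurable f) (n : ℕ) :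
    Integrable fun x => x ^ n * f x := by
  have hn : (-1 : ℝ) < n := by linarith [n.cast_nonneg (α := ℝ)]
  refine Integrable.mono' ((integrable_rpow_mul_exp_neg_mul_sq hb hn).norm.const_mul K)
    ((continuous_pow n).aestronglyMeasurable.mul hmeas) (Eventually.of_forall fun x => ?_)
  rw [norm_mul, norm_mul, rpow_natCast, norm_of_nonneg (exp_pos _).le, mul_left_comm]
  exact mul_le_mul_of_nonneg_left (hf x) (norm_nonneg _)

theorem integrable_sub_pow_mul_of_abs_le_gaussian (hb : 0 < b)
    (hf : ∀ x, |f x| ≤ K * exp (-b * x ^ 2)) (hmeas : AEStronglyMeasurable f) (m : ℝ) (n : ℕ) :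
    Integrable fun x => (x - m) ^ n * f x := by
  have hexpand : (fun x => (x - m) ^ n * f x) =
      fun x => ∑ k ∈ Finset.range (n + 1), ((-m) ^ (n - k) * n.choose k) * (x ^ k * f x) := by
    ext x
    rw [sub_eq_add_neg, add_pow, Finset.sum_mul]
    exact Finset.sum_congr rfl fun k _ => by ring
  rw [hexpand]
  exact integrable_finsetSum _ fun k _ =>
    (integrable_pow_mul_of_abs_le_gaussian hb hf hmeas k).const_mul _

theorem tendsto_sub_mul_cocompact_of_abs_le_gaussian (hb : 0 < b)
    (hf : ∀ x, |f x| ≤ K * exp (-b * x ^ 2)) (m : ℝ) :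
    Tendsto (fun x => (x - m) * f x) (cocompact ℝ) (𝓝 0) := by
  have hpow (n : ℕ) : Tendsto (fun x => x ^ n * f x) (cocompact ℝ) (𝓝 0) := by
    refine squeeze_zero_norm (fun x => ?_)
      (by simpa using (tendsto_rpow_abs_mul_exp_neg_mul_sq_cocompact hb n).const_mul K)
    rw [norm_mul, norm_pow, norm_eq_abs, norm_eq_abs, mul_left_comm, ← neg_mul]
    exact mul_le_mul_of_nonneg_left (hf x) (by positivity)
  simpa [sub_mul] using (hpow 1).sub ((hpow 0).const_mul m)

end GaussianDomination

theorem sub_le_integral_of_hasDerivAt_of_le {g g' φ : ℝ → ℝ} {a b : ℝ}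
    (hderiv : ∀ x, HasDerivAt g (g' x) x) (hφ : Integrable φ) (hle : ∀ x, g' x ≤ φ x)
    (hbot : Tendsto g atBot (𝓝 a)) (htop : Tendsto g atTop (𝓝 b)) :
    b - a ≤ ∫ x, φ x := by
  have hinterval : ∀ᶠ R in atTop, g R - g (-R) ≤ ∫ x in (-R)..R, φ x := by
    filter_upwards [eventually_ge_atTop 0] with R hR
    exact intervalIntegral.sub_le_integral_of_hasDeriv_right_of_le (by linarith)
      (fun x _ => (hderiv x).continuousAt.continuousWithinAt)
      (fun x _ => (hderiv x).hasDerivWithinAt) hφ.integrableOn fun x _ => hle x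
  exact le_of_tendsto_of_tendsto (htop.sub (hbot.comp tendsto_neg_atTop_atBot))
    (intervalIntegral_tendsto_integral hφ tendsto_neg_atTop_atBot tendsto_id) hinterval

theorem mul_integral_sub_sq_mul_le {f l' : ℝ → ℝ} {c m : ℝ} (hf : ∀ x, 0 < f x)
    (hf' : ∀ x, HasDerivAt f (l' x * f x) x)
    (hstrong : ∀ x y, (x - y) * (l' x - l' y) ≤ -c * (x - y) ^ 2)
    (hf_int : Integrable f) (hsub_int : Integrable fun x => (x - m) * f x)
    (hsq_int : Integrable fun x => (x - m) ^ 2 * f x)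
    (hdecay : Tendsto (fun x => (x - m) * f x) (cocompact ℝ) (𝓝 0)) :
    c * ∫ x, (x - m) ^ 2 * f x ≤ (∫ x, f x) + l' m * ∫ x, (x - m) * f x := by
  have hlin : Integrable fun x => f x + l' m * ((x - m) * f x) :=
    hf_int.add (hsub_int.const_mul _)
  have hquad : Integrable fun x => c * ((x - m) ^ 2 * f x) := hsq_int.const_mul c
  have hφ : Integrable fun x => f x + l' m * ((x - m) * f x) - c * ((x - m) ^ 2 * f x) :=
    hlin.sub hquad
  rw [cocompact_eq_atBot_atTop] at hdecay
  have hbound := sub_le_integral_of_hasDerivAt_of_le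
    (fun x => ((hasDerivAt_id' x).sub_const m).mul (hf' x)) hφ
    (fun x => by nlinarith [mul_le_mul_of_nonneg_right (hstrong x m) (hf x).le])
    (hdecay.mono_left le_sup_left) (hdecay.mono_left le_sup_right)
  rw [integral_sub hlin hquad, integral_add hf_int (hsub_int.const_mul _),
    integral_const_mul, integral_const_mul] at hbound
  linarith

theorem integral_sub_mean_mul_eq_zero {f : ℝ → ℝ} (hf_int : Integrable f)
    (hxf_int : Integrable fun x => x * f x) (hf_one : ∫ x, f x = 1) :
    ∫ x, (x - ∫ t, t * f t) * f x = 0 := by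
  simp_rw [sub_mul]
  rw [integral_sub hxf_int (hf_int.const_mul _), integral_const_mul, hf_one, mul_one, sub_self]

theorem variance_le_of_strongly_unimodal_general
    (f : ℝ → ℝ) (hf_pos : ∀ x, 0 < f x)
    (hf_one : ∫ x, f x = 1)
    (c : ℝ) (hc : 0 < c)
    (l' l'' : ℝ → ℝ)
    (hl' : ∀ x, HasDerivAt (fun t => Real.log (f t)) (l' x) x)
    (hl'' : ∀ x, HasDerivAt l' (l'' x) x)
    (hcurv : ∀ x, l'' x ≤ -c) :
    Integrable (fun x => x ^ 2 * f x) ∧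
      ∫ x, (x - ∫ t, t * f t) ^ 2 * f x ≤ c⁻¹ := by
  have hf' (x : ℝ) : HasDerivAt f (l' x * f x) x := hasDerivAt_of_hasDerivAt_log hf_pos (hl' x)
  have hstrong := sub_mul_sub_le_of_hasDerivAt_le hl'' hcurv
  have hgauss (x : ℝ) : |f x| ≤ f 0 * exp (l' 0 ^ 2 / c) * exp (-(c / 4) * x ^ 2) :=
    (abs_of_pos (hf_pos x)).trans_le
      (le_mul_exp_neg_mul_sq_of_strongly_log_concave hf_pos hl' hstrong hc x)
  have hb : 0 < c / 4 := by positivity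
  have hmeas : AEStronglyMeasurable f :=
    (continuous_iff_continuousAt.2 fun x => (hf' x).continuousAt).aestronglyMeasurable
  have hint := integrable_sub_pow_mul_of_abs_le_gaussian hb hgauss hmeas
  have hf_int : Integrable f := by simpa using hint 0 0
  set M := ∫ t, t * f t
  have hcentered : ∫ x, (x - M) * f x = 0 :=
    integral_sub_mean_mul_eq_zero hf_int (by simpa using hint 0 1) hf_one
  have hvar := mul_integral_sub_sq_mul_le hf_pos hf' hstrong hf_int (by simpa using hint M 1)
    (hint M 2) (tendsto_sub_mul_cocompact_of_abs_le_gaussian hb hgauss M)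
  rw [hcentered, hf_one, mul_zero, add_zero] at hvar
  refine ⟨by simpa using hint 0 2, ?_⟩
  rw [inv_eq_one_div, le_div_iff₀ hc]
  linarith

/-- If `Z` has density `f` with `(log f)'' ≤ −c < 0` everywhere, then `Z`
is square integrable and `Var(Z) ≤ c⁻¹`. -/
theorem variance_le_of_strongly_unimodal
    (f : ℝ → ℝ) (hf_pos : ∀ x, 0 < f x)
    (hf_int : Integrable f) (hf_one : ∫ x, f x = 1)
    (c : ℝ) (hc : 0 < c)
    (l' l'' : ℝ → ℝ)
    (hl' : ∀ x, HasDerivAt (fun t => Real.log (f t)) (l' x) x)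
    (hl'' : ∀ x, HasDerivAt l' (l'' x) x)
    (hcurv : ∀ x, l'' x ≤ -c) :
    Integrable (fun x => x ^ 2 * f x) ∧
      ∫ x, (x - ∫ t, t * f t) ^ 2 * f x ≤ c⁻¹ :=
  variance_le_of_strongly_unimodal_general f hf_pos hf_one c hc l' l'' hl' hl'' hcurv
end

section
/- Let α ∈ ℝ, y ∈ ℝ, and let φ, χ, ψ : ℝ → ℝ be twice continuously differentiable functions such that φ' is nonincreasing (φ concave) and χ' is nonincreasing. Assume that for every x ∈ ℝ the functions z ↦ e^{φ(z−αx)+χ(z)}, z ↦ |φ'(z−αx)| e^{φ(z−αx)+χ(z)}, and z ↦ |φ''(z−αx)| e^{φ(z−αx)+χ(z)} are Lebesgue integrable with ∫ e^{φ(z−αx)+χ(z)} dz > 0, that e^{φ(z−αx)+χ(z)} and its z-derivative vanish as |z| → ∞, and that differentiation under the integral sign in x is valid. Define F(x) := ψ(y − x) + log ∫_ℝ e^{φ(z−αx)+χ(z)} dz. Then F is twice differentiable and F''(x) ≤ ψ''(y − x) for every x ∈ ℝ. -/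
/-!
Write `P z = exp (φ (z - α x) + χ z)`, `f z = φ' (z - α x)` and `g = χ'`, so that
`P' = (f + g) P`. The second derivative of `log ∫ P` is
`α² (∫ (f' + f²) P · ∫ P - (∫ f P)²) / (∫ P)²`. Integrating `(f P)' = (f' + f² + f g) P` and
`P'` by parts replaces `∫ (f' + f²) P` by `-∫ f g P` and `∫ g P` by `-∫ f P`, so the bracket is
`-(∫ P · ∫ f g P - ∫ f P · ∫ g P)`, which is `≤ 0` by Chebyshev's inequality for the two
nonincreasing functions `f` and `g`. Since `f g P` need not be integrable, the integrations by
parts are done on intervals whose endpoints run along sequences on which `P` and `f P` tend to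
`0`; such sequences exist because both functions are integrable.
-/

open MeasureTheory Filter Topology Set

theorem integral_mul_integral_le_of_monovary {ι : Type*} [MeasurableSpace ι] {μ : Measure ι}
    {f g w : ι → ℝ} (hfg : Monovary f g) (hw : 0 ≤ w) (hwi : Integrable w μ)
    (hfwi : Integrable (fun s => f s * w s) μ) (hgwi : Integrable (fun s => g s * w s) μ)
    (hfgwi : Integrable (fun s => f s * g s * w s) μ) :
    (∫ s, f s * w s ∂μ) * ∫ s, g s * w s ∂μ ≤ (∫ s, w s ∂μ) * ∫ s, f s * g s * w s ∂μ := by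
  set M := ∫ s, w s ∂μ
  set Jf := ∫ s, f s * w s ∂μ
  set Jg := ∫ s, g s * w s ∂μ
  set Jfg := ∫ s, f s * g s * w s ∂μ
  have inner (t : ι) :
      ∫ s, (f s - f t) * (g s - g t) * w s ∂μ = Jfg - f t * Jg - g t * Jf + f t * g t * M := by
    have expand : (fun s => (f s - f t) * (g s - g t) * w s) = fun s =>
        f s * g s * w s - f t * (g s * w s) - (g t * (f s * w s) - f t * g t * w s) := by
      ext; ring
    rw [expand, integral_sub, integral_sub, integral_sub, integral_const_mul, integral_const_mul,
      integral_const_mul]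
    · ring
    all_goals fun_prop
  have outer : ∫ t, (Jfg - f t * Jg - g t * Jf + f t * g t * M) * w t ∂μ
      = 2 * (M * Jfg - Jf * Jg) := by
    have expand : (fun t => (Jfg - f t * Jg - g t * Jf + f t * g t * M) * w t) = fun t =>
        Jfg * w t - Jg * (f t * w t) - (Jf * (g t * w t) - M * (f t * g t * w t)) := by
      ext; ring
    rw [expand, integral_sub, integral_sub, integral_sub, integral_const_mul, integral_const_mul,
      integral_const_mul, integral_const_mul]
    · ring
    all_goals fun_prop
  have hcov : 0 ≤ 2 * (M * Jfg - Jf * Jg) := by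
    rw [← outer]
    refine integral_nonneg fun t => mul_nonneg ?_ (hw t)
    rw [← inner]
    exact integral_nonneg fun s => mul_nonneg (hfg.sub_mul_sub_nonneg t s) (hw s)
  linarith

theorem MeasureTheory.Integrable.mapClusterPt_zero_atTop {E : Type*} [NormedAddCommGroup E]
    {H : ℝ → E} (hH : Integrable H) : MapClusterPt 0 atTop H := by
  refine mapClusterPt_iff_frequently.2 fun s hs hev => ?_
  obtain ⟨ε, hε, hball⟩ := Metric.mem_nhds_iff.1 hs
  obtain ⟨N, hN⟩ := eventually_atTop.1 hev
  have hconst : IntegrableOn (fun _ => ε) (Ici N) := by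
    refine hH.norm.integrableOn.mono' (by fun_prop) ((ae_restrict_iff' measurableSet_Ici).2
      (ae_of_all _ fun t ht => ?_))
    by_contra hlt
    exact hN t ht (hball (by simpa [abs_of_pos hε] using hlt))
  simp [Real.volume_Ici, hε.ne'] at hconst

section IntegrationByParts

variable {f f' g P : ℝ → ℝ}

theorem intervalIntegral_deriv_add_sq_mul_integral_le_sq_add (hf : ∀ z, HasDerivAt f (f' z) z)
    (hf' : Continuous f') (hg : Continuous g) (hfa : Antitone f) (hga : Antitone g)
    (hP : ∀ z, HasDerivAt P ((f z + g z) * P z) z) (hP0 : 0 ≤ P) {a b : ℝ} (hab : a ≤ b) :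
    (∫ s in a..b, (f' s + f s ^ 2) * P s) * (∫ s in a..b, P s) ≤
      (f b * P b - f a * P a) * (∫ s in a..b, P s) - (∫ s in a..b, f s * P s) * (P b - P a) +
        (∫ s in a..b, f s * P s) ^ 2 := by
  have hfc : Continuous f := continuous_iff_continuousAt.2 fun z => (hf z).continuousAt
  have hPc : Continuous P := continuous_iff_continuousAt.2 fun z => (hP z).continuousAt
  have ftc_fP : (∫ s in a..b, (f' s + f s ^ 2) * P s) + ∫ s in a..b, f s * g s * P s =
      f b * P b - f a * P a := by
    rw [← intervalIntegral.integral_add (Continuous.intervalIntegrable (by fun_prop) _ _)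
      (Continuous.intervalIntegrable (by fun_prop) _ _)]
    refine (intervalIntegral.integral_congr fun s _ => ?_).trans
      (intervalIntegral.integral_eq_sub_of_hasDerivAt (fun z _ => (hf z).mul (hP z))
        (Continuous.intervalIntegrable (by fun_prop) _ _))
    ring
  have ftc_P : (∫ s in a..b, f s * P s) + ∫ s in a..b, g s * P s = P b - P a := by
    rw [← intervalIntegral.integral_add (Continuous.intervalIntegrable (by fun_prop) _ _)
      (Continuous.intervalIntegrable (by fun_prop) _ _)]
    refine (intervalIntegral.integral_congr fun s _ => ?_).trans
      (intervalIntegral.integral_eq_sub_of_hasDerivAt (fun z _ => hP z)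
        (Continuous.intervalIntegrable (by fun_prop) _ _))
    ring
  have cheb := integral_mul_integral_le_of_monovary (μ := volume.restrict (Ioc a b))
    (hfa.monovary hga) hP0 hPc.integrableOn_Ioc (Continuous.integrableOn_Ioc (by fun_prop))
    (Continuous.integrableOn_Ioc (by fun_prop)) (Continuous.integrableOn_Ioc (by fun_prop))
  simp only [← intervalIntegral.integral_of_le hab] at cheb
  rw [← ftc_P, eq_sub_of_add_eq ftc_fP]
  linear_combination cheb

theorem integral_deriv_add_sq_mul_integral_le_sq (hf : ∀ z, HasDerivAt f (f' z) z)
    (hf' : Continuous f') (hg : Continuous g) (hfa : Antitone f) (hga : Antitone g)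
    (hP : ∀ z, HasDerivAt P ((f z + g z) * P z) z) (hP0 : 0 ≤ P) (hPi : Integrable P)
    (hfPi : Integrable fun z => f z * P z) :
    (∫ z, (f' z + f z ^ 2) * P z) * (∫ z, P z) ≤ (∫ z, f z * P z) ^ 2 := by
  by_cases hKi : Integrable fun z => (f' z + f z ^ 2) * P z
  swap
  · rw [integral_undef hKi, zero_mul]
    exact sq_nonneg _
  have hboundary : Integrable fun z => (P z, f z * P z) := hPi.prodMk hfPi
  obtain ⟨b, hb, hbP⟩ := exists_seq_comp_tendsto hboundary.mapClusterPt_zero_atTop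
  obtain ⟨b', hb', hb'P⟩ := exists_seq_comp_tendsto hboundary.comp_neg.mapClusterPt_zero_atTop
  have ha : Tendsto (fun n => -b' n) atTop atBot := tendsto_neg_atTop_atBot.comp hb'
  have hM := intervalIntegral_tendsto_integral hPi ha hb
  have hJ := intervalIntegral_tendsto_integral hfPi ha hb
  have hbound := (((hbP.snd_nhds.sub hb'P.snd_nhds).mul hM).sub
    (hJ.mul (hbP.fst_nhds.sub hb'P.fst_nhds))).add (hJ.pow 2)
  refine (le_of_tendsto_of_tendsto ((intervalIntegral_tendsto_integral hKi ha hb).mul hM) hbound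
    ?_).trans_eq (by simp)
  filter_upwards [ha.eventually_le_atBot 0, hb.eventually_ge_atTop 0] with n han hbn
  exact intervalIntegral_deriv_add_sq_mul_integral_le_sq_add hf hf' hg hfa hga hP hP0
    (han.trans hbn)

end IntegrationByParts

theorem integral_deriv_add_sq_mul_exp_integral_le_sq {φ χ : ℝ → ℝ} (hφ : ContDiff ℝ 2 φ)
    (hχ : ContDiff ℝ 2 χ) (hφ' : Antitone (deriv φ)) (hχ' : Antitone (deriv χ)) (c : ℝ)
    (hint : Integrable fun z => Real.exp (φ (z - c) + χ z))
    (hint1 : Integrable fun z => |deriv φ (z - c)| * Real.exp (φ (z - c) + χ z)) :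
    (∫ z, (deriv (deriv φ) (z - c) + deriv φ (z - c) ^ 2) * Real.exp (φ (z - c) + χ z)) *
        (∫ z, Real.exp (φ (z - c) + χ z)) ≤
      (∫ z, deriv φ (z - c) * Real.exp (φ (z - c) + χ z)) ^ 2 := by
  have hφd : Differentiable ℝ φ := hφ.differentiable two_ne_zero
  have hχd : Differentiable ℝ χ := hχ.differentiable two_ne_zero
  refine integral_deriv_add_sq_mul_integral_le_sq (g := deriv χ)
    (fun z => (hφ.differentiable_deriv_two _).hasDerivAt.comp_sub_const z c) (by fun_prop)
    (hχ.continuous_deriv one_le_two) (fun u v h => hφ' (sub_le_sub_right h c)) hχ'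
    (fun z => (((hφd _).hasDerivAt.comp_sub_const z c).add (hχd z).hasDerivAt).exp.congr_deriv
      (by simp only [Pi.add_apply]; ring)) (fun z => (Real.exp_pos _).le) hint ?_
  have hφ'c : Continuous (deriv φ) := hφ.continuous_deriv one_le_two
  refine hint1.mono' (Continuous.aestronglyMeasurable (by fun_prop)) (ae_of_all _ fun z => ?_)
  rw [norm_mul, Real.norm_eq_abs, Real.norm_of_nonneg (Real.exp_pos _).le]

theorem deriv_deriv_comp_const_sub_add_log_le {ψ G G' G'' : ℝ → ℝ} (y : ℝ) (hψ : ContDiff ℝ 2 ψ)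
    (hG : ∀ x, HasDerivAt G (G' x) x) (hG' : ∀ x, HasDerivAt G' (G'' x) x)
    (hpos : ∀ x, 0 < G x) (hle : ∀ x, G'' x * G x ≤ G' x ^ 2) :
    Differentiable ℝ (fun x => ψ (y - x) + Real.log (G x)) ∧
      Differentiable ℝ (deriv fun x => ψ (y - x) + Real.log (G x)) ∧
      ∀ x, deriv (deriv fun x => ψ (y - x) + Real.log (G x)) x ≤ deriv (deriv ψ) (y - x) := by
  have hF (x : ℝ) : HasDerivAt (fun x => ψ (y - x) + Real.log (G x))
      (-deriv ψ (y - x) + G' x / G x) x :=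
    ((hψ.differentiable two_ne_zero _).hasDerivAt.comp_const_sub y x).add
      ((hG x).log (hpos x).ne')
  have hF' (x : ℝ) : HasDerivAt (deriv fun x => ψ (y - x) + Real.log (G x))
      (deriv (deriv ψ) (y - x) + (G'' x * G x - G' x * G' x) / G x ^ 2) x := by
    rw [funext fun x => (hF x).deriv]
    exact (((hψ.differentiable_deriv_two _).hasDerivAt.comp_const_sub y x).neg.congr_deriv
      (neg_neg _)).add ((hG' x).div (hG x) (hpos x).ne')
  refine ⟨fun x => (hF x).differentiableAt, fun x => (hF' x).differentiableAt, fun x => ?_⟩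
  rw [(hF' x).deriv, add_le_iff_nonpos_right]
  exact div_nonpos_of_nonpos_of_nonneg (by linarith [hle x, sq (G' x)]) (sq_nonneg _)

theorem curvature_bound_strongly_unimodal_general
    (α y : ℝ) (φ χ ψ : ℝ → ℝ)
    (hφ : ContDiff ℝ 2 φ) (hχ : ContDiff ℝ 2 χ) (hψ : ContDiff ℝ 2 ψ)
    (hφ' : Antitone (deriv φ)) (hχ' : Antitone (deriv χ))
    (hint : ∀ x : ℝ, Integrable fun z => Real.exp (φ (z - α * x) + χ z))
    (hint1 : ∀ x : ℝ,
      Integrable fun z => |deriv φ (z - α * x)| * Real.exp (φ (z - α * x) + χ z))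
    (hpos : ∀ x : ℝ, 0 < ∫ z, Real.exp (φ (z - α * x) + χ z))
    (hG1 : ∀ x : ℝ,
      HasDerivAt (fun t => ∫ z, Real.exp (φ (z - α * t) + χ z))
        (∫ z, -α * deriv φ (z - α * x) * Real.exp (φ (z - α * x) + χ z)) x)
    (hG2 : ∀ x : ℝ,
      HasDerivAt (fun t => ∫ z, -α * deriv φ (z - α * t) * Real.exp (φ (z - α * t) + χ z))
        (∫ z, (α ^ 2 * deriv (deriv φ) (z - α * x) +
            α ^ 2 * (deriv φ (z - α * x)) ^ 2) * Real.exp (φ (z - α * x) + χ z)) x) :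
    Differentiable ℝ
        (fun x => ψ (y - x) + Real.log (∫ z, Real.exp (φ (z - α * x) + χ z))) ∧
      Differentiable ℝ
        (deriv fun x => ψ (y - x) + Real.log (∫ z, Real.exp (φ (z - α * x) + χ z))) ∧
      ∀ x : ℝ,
        deriv (deriv fun x => ψ (y - x) + Real.log (∫ z, Real.exp (φ (z - α * x) + χ z))) x ≤
          deriv (deriv ψ) (y - x) := by
  refine deriv_deriv_comp_const_sub_add_log_le y hψ hG1 hG2 hpos fun x => ?_
  have h := integral_deriv_add_sq_mul_exp_integral_le_sq hφ hχ hφ' hχ' (α * x) (hint x) (hint1 x)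
  simp only [← mul_add, mul_assoc, neg_mul, integral_neg, integral_const_mul] at h ⊢
  nlinarith [mul_le_mul_of_nonneg_left h (sq_nonneg α)]

/-- If `φ, χ, ψ` are `C²` with `φ'` and `χ'` nonincreasing, and the stated
integrability, positivity, vanishing-at-infinity and differentiation-under-the-integral
hypotheses hold, then `F(x) = ψ(y − x) + log ∫ e^{φ(z−αx)+χ(z)} dz` is twice differentiable
with `F''(x) ≤ ψ''(y − x)` for every `x`. -/
theorem curvature_bound_strongly_unimodal
    (α y : ℝ) (φ χ ψ : ℝ → ℝ)
    (hφ : ContDiff ℝ 2 φ) (hχ : ContDiff ℝ 2 χ) (hψ : ContDiff ℝ 2 ψ)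
    (hφ' : Antitone (deriv φ)) (hχ' : Antitone (deriv χ))
    (hint : ∀ x : ℝ, Integrable fun z => Real.exp (φ (z - α * x) + χ z))
    (hint1 : ∀ x : ℝ,
      Integrable fun z => |deriv φ (z - α * x)| * Real.exp (φ (z - α * x) + χ z))
    (hint2 : ∀ x : ℝ,
      Integrable fun z => |deriv (deriv φ) (z - α * x)| * Real.exp (φ (z - α * x) + χ z))
    (hpos : ∀ x : ℝ, 0 < ∫ z, Real.exp (φ (z - α * x) + χ z))
    (hvanish : ∀ x : ℝ,
      Tendsto (fun z => Real.exp (φ (z - α * x) + χ z)) (cocompact ℝ) (nhds 0))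
    (hvanish' : ∀ x : ℝ,
      Tendsto (fun z => (deriv φ (z - α * x) + deriv χ z) * Real.exp (φ (z - α * x) + χ z))
        (cocompact ℝ) (nhds 0))
    (hG1 : ∀ x : ℝ,
      HasDerivAt (fun t => ∫ z, Real.exp (φ (z - α * t) + χ z))
        (∫ z, -α * deriv φ (z - α * x) * Real.exp (φ (z - α * x) + χ z)) x)
    (hG2 : ∀ x : ℝ,
      HasDerivAt (fun t => ∫ z, -α * deriv φ (z - α * t) * Real.exp (φ (z - α * t) + χ z))
        (∫ z, (α ^ 2 * deriv (deriv φ) (z - α * x) +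
            α ^ 2 * (deriv φ (z - α * x)) ^ 2) * Real.exp (φ (z - α * x) + χ z)) x) :
    Differentiable ℝ
        (fun x => ψ (y - x) + Real.log (∫ z, Real.exp (φ (z - α * x) + χ z))) ∧
      Differentiable ℝ
        (deriv fun x => ψ (y - x) + Real.log (∫ z, Real.exp (φ (z - α * x) + χ z))) ∧
      ∀ x : ℝ,
        deriv (deriv fun x => ψ (y - x) + Real.log (∫ z, Real.exp (φ (z - α * x) + χ z))) x ≤
          deriv (deriv ψ) (y - x) :=
  curvature_bound_strongly_unimodal_general α y φ χ ψ hφ hχ hψ hφ' hχ' hint hint1 hpos hG1 hG2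
end

section
/- Let α ∈ ℝ and let φ, χ : ℝ → ℝ be twice continuously differentiable functions such that φ' is nonincreasing (φ concave) and χ' is nonincreasing. Assume that for every x ∈ ℝ the functions z ↦ e^{φ(z−αx)+χ(z)}, z ↦ |z| e^{φ(z−αx)+χ(z)}, and z ↦ |z φ'(z−αx)| e^{φ(z−αx)+χ(z)} are Lebesgue integrable with ∫ e^{φ(z−αx)+χ(z)} dz > 0, that (z − c) e^{φ(z−αx)+χ(z)} → 0 as |z| → ∞ for every constant c, and that differentiation under the integral sign in x is valid. Define e(x) := ∫_ℝ z e^{φ(z−αx)+χ(z)} dz / ∫_ℝ e^{φ(z−αx)+χ(z)} dz. Then e is differentiable and |e'(x)| ≤ |α| for every x ∈ ℝ. -/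
/-!
Write `w z = exp (φ (z - α x) + χ z)` and `m = e(x)`. Differentiating under the integral gives
`e'(x) = -α I / ∫ w` with the covariance `I = ∫ (z - m) φ'(z - α x) w z dz`.
Since `φ'` is nonincreasing, `(z - m) (φ'(z - α x) - φ'(m - α x)) ≤ 0` and `∫ (z - m) w = 0`,
so `I ≤ 0`. Integrating `((z - m) w)' = w + (z - m) (φ'(z - α x) + χ' z) w` over `ℝ` gives
`0 = ∫ w + I + ∫ (z - m) χ' w`, whose last term is `≤ 0` by the same argument; hence `I ≥ -∫ w`
and `|e'(x)| ≤ |α|`.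
-/

open MeasureTheory Filter Topology

theorem MeasureTheory.Integrable.of_abs_mul {μ : Measure ℝ} {f w : ℝ → ℝ}
    (h : Integrable (fun z => |f z| * w z) μ) (hw : ∀ z, 0 ≤ w z)
    (hfw : AEStronglyMeasurable (fun z => f z * w z) μ) :
    Integrable (fun z => f z * w z) μ :=
  h.mono' hfw <| .of_forall fun z => by rw [Real.norm_eq_abs, abs_mul, abs_of_nonneg (hw z)]

theorem MeasureTheory.LocallyIntegrable.integrable_of_integrable_id_mul {f : ℝ → ℝ}
    (hf : LocallyIntegrable f) (hzf : Integrable fun z => z * f z) : Integrable f := by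
  have hloc : Integrable (Set.indicator (Set.Icc (-1) 1) f) :=
    (hf.integrableOn_isCompact isCompact_Icc).integrable_indicator measurableSet_Icc
  refine (hzf.norm.add hloc.norm).mono' hf.aestronglyMeasurable (.of_forall fun z => ?_)
  simp only [Pi.add_apply]
  by_cases hz : z ∈ Set.Icc (-1 : ℝ) 1
  · rw [Set.indicator_of_mem hz]
    linarith [norm_nonneg (z * f z)]
  · have h1 : 1 ≤ ‖z‖ := by
      rw [Set.mem_Icc, not_and_or, not_le, not_le] at hz
      rw [Real.norm_eq_abs, le_abs]
      rcases hz with hz | hz <;> [right; left] <;> linarith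
    rw [norm_mul]
    nlinarith [norm_nonneg (f z), norm_nonneg (Set.indicator (Set.Icc (-1 : ℝ) 1) f z)]

theorem sub_mul_le_sub_mul_of_antitone {f : ℝ → ℝ} (hf : Antitone f) (z m : ℝ) :
    (z - m) * f z ≤ (z - m) * f m := by
  rcases le_total z m with h | h <;> nlinarith [hf h]

theorem integral_sub_mul_antitone_mul_nonpos {μ : Measure ℝ} {f w : ℝ → ℝ} {m : ℝ}
    (hf : Antitone f) (hw : ∀ z, 0 ≤ w z)
    (hfw : Integrable (fun z => (z - m) * f z * w z) μ)
    (hzw : Integrable (fun z => (z - m) * w z) μ)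
    (hm : ∫ z, (z - m) * w z ∂μ = 0) :
    ∫ z, (z - m) * f z * w z ∂μ ≤ 0 :=
  calc ∫ z, (z - m) * f z * w z ∂μ ≤ ∫ z, f m * ((z - m) * w z) ∂μ :=
        integral_mono hfw (hzw.const_mul _) fun z => by
          nlinarith [sub_mul_le_sub_mul_of_antitone hf z m, hw z]
    _ = 0 := by rw [integral_const_mul, hm, mul_zero]

theorem integral_nonneg_of_hasDerivAt_le {g g' u : ℝ → ℝ} (hg : ∀ z, HasDerivAt g (g' z) z)
    (hle : ∀ z, g' z ≤ u z) (hu : Integrable u) (hlim : Tendsto g (cocompact ℝ) (𝓝 0)) :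
    0 ≤ ∫ z, u z := by
  have hbot : Tendsto (fun n : ℕ => -(n : ℝ)) atTop atBot :=
    tendsto_neg_atTop_atBot.comp tendsto_natCast_atTop_atTop
  have hlim_sub : Tendsto (fun n : ℕ => g n - g (-(n : ℝ))) atTop (𝓝 0) := by
    rw [cocompact_eq_atBot_atTop] at hlim
    simpa using (hlim.comp (tendsto_natCast_atTop_atTop.mono_right le_sup_right)).sub
      (hlim.comp (hbot.mono_right le_sup_left))
  refine le_of_tendsto_of_tendsto' hlim_sub
    (intervalIntegral_tendsto_integral hu hbot tendsto_natCast_atTop_atTop) fun n => ?_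
  exact intervalIntegral.sub_le_integral_of_hasDeriv_right_of_le (by simp)
    (fun z _ => (hg z).continuousAt.continuousWithinAt) (fun z _ => (hg z).hasDerivWithinAt)
    hu.integrableOn fun z _ => hle z

theorem integral_sub_div_mul_eq_zero {μ : Measure ℝ} {w : ℝ → ℝ} (hw : Integrable w μ)
    (hzw : Integrable (fun z => z * w z) μ) (hD : ∫ z, w z ∂μ ≠ 0) :
    ∫ z, (z - (∫ z, z * w z ∂μ) / ∫ z, w z ∂μ) * w z ∂μ = 0 := by
  simp_rw [sub_mul]
  rw [integral_sub hzw (hw.const_mul _), integral_const_mul, div_mul_cancel₀ _ hD, sub_self]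

/-- `(z - m) b z w z` need not be integrable, so `((z - m) w z)'` is only bounded above, using
`(z - m) b z ≤ (z - m) b m`. -/
theorem neg_integral_le_integral_sub_mul_of_hasDerivAt {w a b : ℝ → ℝ} {m : ℝ}
    (hw : ∀ z, HasDerivAt w ((a z + b z) * w z) z) (hw0 : ∀ z, 0 ≤ w z) (hb : Antitone b)
    (hwint : Integrable w) (hzw : Integrable fun z => (z - m) * w z)
    (hazw : Integrable fun z => (z - m) * a z * w z) (hm : ∫ z, (z - m) * w z = 0)
    (hlim : Tendsto (fun z => (z - m) * w z) (cocompact ℝ) (𝓝 0)) :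
    -∫ z, w z ≤ ∫ z, (z - m) * a z * w z := by
  have hderiv : ∀ z, HasDerivAt (fun z => (z - m) * w z)
      (w z + (z - m) * ((a z + b z) * w z)) z := fun z => by
    simpa using ((hasDerivAt_id z).sub_const m).fun_mul (hw z)
  have hnonneg := integral_nonneg_of_hasDerivAt_le hderiv
    (u := fun z => w z + (z - m) * a z * w z + b m * ((z - m) * w z))
    (fun z => by nlinarith [sub_mul_le_sub_mul_of_antitone hb z m, hw0 z])
    ((hwint.add hazw).add (hzw.const_mul _)) hlim
  rw [integral_add (f := fun z => w z + (z - m) * a z * w z) (hwint.add hazw) (hzw.const_mul _),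
    integral_add hwint hazw, integral_const_mul, hm, mul_zero, add_zero] at hnonneg
  linarith

theorem abs_integral_sub_mean_mul_le_integral {w a b : ℝ → ℝ}
    (hw : ∀ z, HasDerivAt w ((a z + b z) * w z) z) (hw0 : ∀ z, 0 ≤ w z)
    (ha : Antitone a) (hb : Antitone b) (hwint : Integrable w)
    (hzw : Integrable fun z => z * w z) (hzaw : Integrable fun z => z * a z * w z)
    (haw : Integrable fun z => a z * w z) (hD : 0 < ∫ z, w z)
    (hlim : Tendsto (fun z => (z - (∫ z, z * w z) / ∫ z, w z) * w z) (cocompact ℝ) (𝓝 0)) :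
    |∫ z, (z - (∫ z, z * w z) / ∫ z, w z) * a z * w z| ≤ ∫ z, w z := by
  set m := (∫ z, z * w z) / ∫ z, w z
  have hm : ∫ z, (z - m) * w z = 0 := integral_sub_div_mul_eq_zero hwint hzw hD.ne'
  have hzmw : Integrable fun z => (z - m) * w z := by
    refine (hzw.sub (hwint.const_mul m)).congr (.of_forall fun z => ?_)
    simp only [Pi.sub_apply]; ring
  have hazw : Integrable fun z => (z - m) * a z * w z := by
    refine (hzaw.sub (haw.const_mul m)).congr (.of_forall fun z => ?_)
    simp only [Pi.sub_apply]; ring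
  exact abs_le.2 ⟨neg_integral_le_integral_sub_mul_of_hasDerivAt hw hw0 hb hwint hzmw hazw hm hlim,
    (integral_sub_mul_antitone_mul_nonpos ha hw0 hazw hzmw hm).trans hD.le⟩

theorem quotient_rule_integral_eq {μ : Measure ℝ} {w a : ℝ → ℝ} (α : ℝ)
    (hzaw : Integrable (fun z => z * a z * w z) μ) (haw : Integrable (fun z => a z * w z) μ)
    (hD : ∫ z, w z ∂μ ≠ 0) :
    ((∫ z, z * (-α * a z) * w z ∂μ) * (∫ z, w z ∂μ) -
        (∫ z, z * w z ∂μ) * ∫ z, -α * a z * w z ∂μ) / (∫ z, w z ∂μ) ^ 2 =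
      -α * (∫ z, (z - (∫ z, z * w z ∂μ) / ∫ z, w z ∂μ) * a z * w z ∂μ) / ∫ z, w z ∂μ := by
  set m := (∫ z, z * w z ∂μ) / ∫ z, w z ∂μ
  have hsplit : ∫ z, (z - m) * a z * w z ∂μ = (∫ z, z * a z * w z ∂μ) - m * ∫ z, a z * w z ∂μ := by
    rw [← integral_const_mul, ← integral_sub hzaw (haw.const_mul m)]
    congr 1 with z; ring
  have hN' : ∫ z, z * (-α * a z) * w z ∂μ = -α * ∫ z, z * a z * w z ∂μ := by
    rw [← integral_const_mul]; congr 1 with z; ring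
  have hD' : ∫ z, -α * a z * w z ∂μ = -α * ∫ z, a z * w z ∂μ := by
    rw [← integral_const_mul]; congr 1 with z; ring
  rw [hsplit, hN', hD']
  simp only [m]
  field_simp
  ring

theorem hasDerivAt_exp_comp_sub_add {φ χ : ℝ → ℝ} (hφ : Differentiable ℝ φ)
    (hχ : Differentiable ℝ χ) (c z : ℝ) :
    HasDerivAt (fun z => Real.exp (φ (z - c) + χ z))
      ((deriv φ (z - c) + deriv χ z) * Real.exp (φ (z - c) + χ z)) z := by
  simpa [mul_comm] using
    (((hφ (z - c)).hasDerivAt.comp_sub_const z c).add (hχ z).hasDerivAt).exp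

/-- If `φ, χ` are `C²` with `φ'` and `χ'` nonincreasing, and the stated
integrability, positivity, vanishing-at-infinity and differentiation-under-the-integral
hypotheses hold, then the conditional mean
`e(x) = (∫ z e^{φ(z−αx)+χ(z)} dz)/(∫ e^{φ(z−αx)+χ(z)} dz)` is differentiable with
`|e'(x)| ≤ |α|` for every `x`. -/
theorem conditional_mean_lipschitz_strongly_unimodal
    (α : ℝ) (φ χ : ℝ → ℝ)
    (hφ : ContDiff ℝ 2 φ) (hχ : ContDiff ℝ 2 χ)
    (hφ' : Antitone (deriv φ)) (hχ' : Antitone (deriv χ))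
    (hint : ∀ x : ℝ, Integrable fun z => Real.exp (φ (z - α * x) + χ z))
    (hint1 : ∀ x : ℝ, Integrable fun z => |z| * Real.exp (φ (z - α * x) + χ z))
    (hint2 : ∀ x : ℝ,
      Integrable fun z => |z * deriv φ (z - α * x)| * Real.exp (φ (z - α * x) + χ z))
    (hpos : ∀ x : ℝ, 0 < ∫ z, Real.exp (φ (z - α * x) + χ z))
    (hvanish : ∀ x c : ℝ,
      Tendsto (fun z => (z - c) * Real.exp (φ (z - α * x) + χ z)) (cocompact ℝ) (nhds 0))
    (hN : ∀ x : ℝ,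
      HasDerivAt (fun t => ∫ z, z * Real.exp (φ (z - α * t) + χ z))
        (∫ z, z * (-α * deriv φ (z - α * x)) * Real.exp (φ (z - α * x) + χ z)) x)
    (hD : ∀ x : ℝ,
      HasDerivAt (fun t => ∫ z, Real.exp (φ (z - α * t) + χ z))
        (∫ z, -α * deriv φ (z - α * x) * Real.exp (φ (z - α * x) + χ z)) x) :
    Differentiable ℝ
        (fun x => (∫ z, z * Real.exp (φ (z - α * x) + χ z)) /
          ∫ z, Real.exp (φ (z - α * x) + χ z)) ∧
      ∀ x : ℝ,
        |deriv
            (fun x => (∫ z, z * Real.exp (φ (z - α * x) + χ z)) /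
              ∫ z, Real.exp (φ (z - α * x) + χ z)) x| ≤ |α| := by
  have hdiv := fun x => (hN x).fun_div (hD x) (hpos x).ne'
  refine ⟨fun x => (hdiv x).differentiableAt, fun x => ?_⟩
  set w := fun z => Real.exp (φ (z - α * x) + χ z)
  have hw0 : ∀ z, 0 ≤ w z := fun z => (Real.exp_pos _).le
  have hwc : Continuous w := by
    have := hφ.continuous; have := hχ.continuous; fun_prop
  have ha : Antitone fun z => deriv φ (z - α * x) :=
    hφ'.comp_monotone fun _ _ h => sub_le_sub_right h _
  have hzw : Integrable fun z => z * w z :=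
    (hint1 x).of_abs_mul hw0 (continuous_id.mul hwc).aestronglyMeasurable
  have hzaw : Integrable fun z => z * deriv φ (z - α * x) * w z :=
    (hint2 x).of_abs_mul hw0
      ((measurable_id.mul ha.measurable).mul hwc.measurable).aestronglyMeasurable
  have haw : Integrable fun z => deriv φ (z - α * x) * w z :=
    (ha.locallyIntegrable.mul_continuous hwc).integrable_of_integrable_id_mul
      (by simpa only [mul_assoc] using hzaw)
  have hI := abs_integral_sub_mean_mul_le_integral
    (hasDerivAt_exp_comp_sub_add (hφ.differentiable two_ne_zero) (hχ.differentiable two_ne_zero)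
      (α * x)) hw0 ha hχ' (hint x) hzw hzaw haw (hpos x) (hvanish x _)
  rw [(hdiv x).deriv, quotient_rule_integral_eq α hzaw haw (hpos x).ne', abs_div, abs_mul, abs_neg,
    abs_of_pos (hpos x), div_le_iff₀ (hpos x)]
  exact mul_le_mul_of_nonneg_left hI (abs_nonneg α)
end
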